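/- arXiv:2106.06562 — 3 statements merged into one kernel-verified Lean document; each statement's English description precedes it below -/
import Mathlib

section
/- Let O_n be the ortho-chain square cactus of order n (n four-cycles in a chain, consecutive squares sharing one vertex, the cut vertices of each internal square adjacent). Then Mo_e(O_{2k}) = 48k² − 16k and Mo_e(O_{2k+1}) = 48k² + 32k for all k ≥ 1. -/
open Finset

section MostarDefs

variable {V : Type*}

/-- Number of vertices of `G` strictly closer to `u` than to `v`. -/
noncomputable def closerCount (G : SimpleGraph V) (u v : V) : ℕ :=
  Nat.card {w : V // G.dist w u < G.dist w v}

/-- Contribution `|n_u - n_v|` of an edge, as a symmetric function on `Sym2 V`. -/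
noncomputable def mostarTerm (G : SimpleGraph V) : Sym2 V → ℕ :=
  Sym2.lift ⟨fun u v => ((closerCount G u v : ℤ) - closerCount G v u).natAbs,
    fun u v => by dsimp only; omega⟩

/-- The Mostar index of a finite graph. -/
noncomputable def mostar (G : SimpleGraph V) [Finite V] : ℕ :=
  letI := Fintype.ofFinite V
  letI := Classical.decEq V
  letI := Classical.decRel G.Adj
  ∑ e ∈ G.edgeFinset, mostarTerm G e

/-- Distance from a vertex `w` to an edge, as min over the endpoints. -/
noncomputable def vertexEdgeDist (G : SimpleGraph V) (w : V) : Sym2 V → ℕ :=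
  Sym2.lift ⟨fun x y => min (G.dist x w) (G.dist y w), fun _ _ => min_comm _ _⟩

/-- Number of edges of `G` strictly closer to `u` than to `v`. -/
noncomputable def edgeCloserCount (G : SimpleGraph V) (u v : V) : ℕ :=
  Nat.card {e : Sym2 V // e ∈ G.edgeSet ∧ vertexEdgeDist G u e < vertexEdgeDist G v e}

/-- Contribution `|m_u - m_v|` of an edge, as a symmetric function on `Sym2 V`. -/
noncomputable def emostarTerm (G : SimpleGraph V) : Sym2 V → ℕ :=
  Sym2.lift ⟨fun u v => ((edgeCloserCount G u v : ℤ) - edgeCloserCount G v u).natAbs,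
    fun u v => by dsimp only; omega⟩

/-- The edge Mostar index of a finite graph. -/
noncomputable def emostar (G : SimpleGraph V) [Finite V] : ℕ :=
  letI := Fintype.ofFinite V
  letI := Classical.decEq V
  letI := Classical.decRel G.Adj
  ∑ e ∈ G.edgeFinset, emostarTerm G e

end MostarDefs

/-- Global index of the `p`-th vertex of the `i`-th cycle in a chain of `n` cycles of
length `c`, where consecutive cycles share one vertex: position `0` of cycle `i` is the
entry cut vertex (identified with position `d` of cycle `i-1`). -/
def chainPos (c d i p : ℕ) : ℕ :=
  if p = 0 then (if i = 0 then 0 else (i - 1) * (c - 1) + d) else i * (c - 1) + p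

/-- The chain cactus consisting of `n` cycles of length `c` in a chain, where consecutive
cycles share exactly one vertex, and the two cut vertices of each internal cycle are at
positions `0` and `d` (hence at distance `min d (c - d)` in the cycle). -/
def cactusChain (n c d : ℕ) : SimpleGraph (Fin (n * (c - 1) + 1)) where
  Adj u v := u ≠ v ∧ ∃ i p q, i < n ∧ p < c ∧ q < c ∧
    ((p + 1) % c = q ∨ (q + 1) % c = p) ∧
    u.val = chainPos c d i p ∧ v.val = chainPos c d i q
  symm := ⟨by
    rintro u v ⟨hne, i, p, q, hi, hp, hq, hpq, hu, hv⟩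
    exact ⟨hne.symm, i, q, p, hi, hq, hp, hpq.symm, hv, hu⟩⟩
  loopless := ⟨fun u h => h.1 rfl⟩

namespace OrthoAux
def A (i : ℕ) : ℕ := if i = 0 then 0 else 3*i - 2
def sq (v : ℕ) : ℕ := (v + 2) / 3 - 1
def ps (v : ℕ) : ℕ := v - 3 * sq v
def cyc (p q : ℕ) : ℕ := min (max p q - min p q) (4 - (max p q - min p q))
def dd0 (u v : ℕ) : ℕ :=
  if sq u = sq v then cyc (ps u) (ps v)
  else cyc (ps u) 1 + (sq v - sq u - 1) + cyc (ps v) 0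
def dd (u v : ℕ) : ℕ := if u ≤ v then dd0 u v else dd0 v u

lemma A_zero : A 0 = 0 := rfl
lemma A_succ (t : ℕ) : A (t+1) = 3*t+1 := by rw [A, if_neg (Nat.succ_ne_zero t)]; omega

lemma dd_self (v : ℕ) : dd v v = 0 := by
  simp only [dd, dd0, sq, ps, cyc]; split_ifs <;> omega

lemma dd_comm (u v : ℕ) : dd u v = dd v u := by
  rcases Nat.lt_trichotomy u v with h | rfl | h
  · simp only [dd]; rw [if_pos h.le, if_neg (by omega)]
  · rfl
  · simp only [dd]; rw [if_neg (by omega), if_pos h.le]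

lemma ddBB (a b : ℕ) : dd (3*a+1) (3*b+1) = max a b - min a b := by
  simp only [dd, dd0, sq, ps, cyc]; split_ifs <;> simp only [*, ↓reduceIte, not_false_eq_true] at * <;> omega

lemma ddBC (a b : ℕ) : dd (3*a+1) (3*b+2) = (max a b - min a b) + 1 := by
  simp only [dd, dd0, sq, ps, cyc]; split_ifs <;> simp only [*, ↓reduceIte, not_false_eq_true] at * <;> omega

lemma ddBD (a b : ℕ) : dd (3*a+1) (3*b+3) = if a < b then b-a else if a = b then 2 else a-b+2 := by
  simp only [dd, dd0, sq, ps, cyc]; split_ifs <;> simp only [*, ↓reduceIte, not_false_eq_true] at * <;> split_ifs <;> omega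

lemma ddCC (a b : ℕ) : dd (3*a+2) (3*b+2) = if a = b then 0 else (max a b - min a b) + 2 := by
  simp only [dd, dd0, sq, ps, cyc]; split_ifs <;> simp only [*, ↓reduceIte, not_false_eq_true] at * <;> split_ifs <;> omega

lemma ddCB (a b : ℕ) : dd (3*a+2) (3*b+1) = (max a b - min a b) + 1 := by
  rw [dd_comm, ddBC, max_comm, min_comm]

lemma ddCD (a b : ℕ) : dd (3*a+2) (3*b+3) = if a = b then 1 else if a < b then b-a+1 else a-b+3 := by
  simp only [dd, dd0, sq, ps, cyc]; split_ifs <;> simp only [*, ↓reduceIte, not_false_eq_true] at * <;> split_ifs <;> omega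

lemma ddDD (a b : ℕ) : dd (3*a+3) (3*b+3) = if a = b then 0 else (max a b - min a b) + 2 := by
  simp only [dd, dd0, sq, ps, cyc]; split_ifs <;> simp only [*, ↓reduceIte, not_false_eq_true] at * <;> split_ifs <;> omega

lemma ddDB (a b : ℕ) : dd (3*a+3) (3*b+1) = if b < a then a-b else if a = b then 2 else b-a+2 := by
  rw [dd_comm, ddBD]; split_ifs <;> omega

lemma ddDC (a b : ℕ) : dd (3*a+3) (3*b+2) = if a = b then 1 else if b < a then a-b+1 else b-a+3 := by
  rw [dd_comm, ddCD]; split_ifs <;> omega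

lemma dd0B (b : ℕ) : dd 0 (3*b+1) = b+1 := by
  simp only [dd, dd0, sq, ps, cyc]; split_ifs <;> simp only [*, ↓reduceIte, not_false_eq_true] at * <;> omega
lemma dd0C (b : ℕ) : dd 0 (3*b+2) = b+2 := by
  simp only [dd, dd0, sq, ps, cyc]; split_ifs <;> simp only [*, ↓reduceIte, not_false_eq_true] at * <;> omega
lemma dd0D (b : ℕ) : dd 0 (3*b+3) = b+1 := by
  simp only [dd, dd0, sq, ps, cyc]; split_ifs <;> simp only [*, ↓reduceIte, not_false_eq_true] at * <;> omega
lemma ddB0 (b : ℕ) : dd (3*b+1) 0 = b+1 := by rw [dd_comm, dd0B]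
lemma ddC0 (b : ℕ) : dd (3*b+2) 0 = b+2 := by rw [dd_comm, dd0C]
lemma ddD0 (b : ℕ) : dd (3*b+3) 0 = b+1 := by rw [dd_comm, dd0D]

lemma ddAA (a b : ℕ) : dd (A a) (A b) = max a b - min a b := by
  rcases a with _ | s <;> rcases b with _ | t <;>
    simp only [A_zero, A_succ, dd_self, ddBB, dd0B, ddB0] <;> omega

lemma ddAB (a b : ℕ) : dd (A a) (3*b+1) = max a (b+1) - min a (b+1) := by
  rcases a with _ | s <;> simp only [A_zero, A_succ, dd0B, ddBB] <;> omega

lemma ddAC (a b : ℕ) : dd (A a) (3*b+2) = if a ≤ b then b-a+2 else a-b := by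
  rcases a with _ | s <;> simp only [A_zero, A_succ, dd0C, ddBC] <;> split_ifs <;> omega

lemma ddAD (a b : ℕ) : dd (A a) (3*b+3) = if a ≤ b then b-a+1 else a-b+1 := by
  rcases a with _ | s <;> simp only [A_zero, A_succ, dd0D, ddBD] <;> split_ifs <;> omega

lemma ddBA (a b : ℕ) : dd (3*a+1) (A b) = max (a+1) b - min (a+1) b := by
  rw [dd_comm, ddAB]; omega
lemma ddCA (a b : ℕ) : dd (3*a+2) (A b) = if b ≤ a then a-b+2 else b-a := by
  rw [dd_comm, ddAC]
lemma ddDA (a b : ℕ) : dd (3*a+3) (A b) = if b ≤ a then a-b+1 else b-a+1 := by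
  rw [dd_comm, ddAD]

lemma canon (u : ℕ) : u = 0 ∨ ∃ t, u = 3*t+1 ∨ u = 3*t+2 ∨ u = 3*t+3 := by
  rcases u with _ | v
  · left; rfl
  · right; exact ⟨v / 3, by omega⟩
end OrthoAux

namespace OrthoAux

variable {n : ℕ}

abbrev OG (n : ℕ) : SimpleGraph (Fin (n*3+1)) := cactusChain n 4 1

def vtx (n m : ℕ) : Fin (n*3+1) := ⟨min m (n*3), by omega⟩

lemma vtx_val {m : ℕ} (h : m ≤ n*3) : (vtx n m).val = m := by
  simp only [vtx]; omega

/-- edge relation of the ortho chain, on values -/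
def ER (n a b : ℕ) : Prop := ∃ i, i < n ∧
 ((a = A i ∧ b = 3*i+1) ∨ (b = A i ∧ a = 3*i+1) ∨
  (a = 3*i+1 ∧ b = 3*i+2) ∨ (b = 3*i+1 ∧ a = 3*i+2) ∨
  (a = 3*i+2 ∧ b = 3*i+3) ∨ (b = 3*i+2 ∧ a = 3*i+3) ∨
  (a = 3*i+3 ∧ b = A i) ∨ (b = 3*i+3 ∧ a = A i))

lemma chainPos41 (i p : ℕ) : chainPos 4 1 i p = if p = 0 then A i else 3*i+p := by
  simp only [chainPos, A]; split_ifs <;> omega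

lemma adj_mk {u v : Fin (n*3+1)} (i p q : ℕ) (hi : i < n) (hp : p < 4) (hq : q < 4)
    (hpq : (p+1)%4 = q ∨ (q+1)%4 = p) (hu : u.val = chainPos 4 1 i p)
    (hv : v.val = chainPos 4 1 i q) (hne : u.val ≠ v.val) : (OG n).Adj u v :=
  ⟨fun h => hne (congrArg Fin.val h), i, p, q, hi, hp, hq, hpq, hu, hv⟩

lemma adj_iff {u v : Fin (n*3+1)} : (OG n).Adj u v ↔ ER n u.val v.val := by
  constructor
  · rintro ⟨-, i, p, q, hi, hp, hq, hpq, hu, hv⟩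
    refine ⟨i, hi, ?_⟩
    rw [chainPos41] at hu hv
    interval_cases p <;> interval_cases q <;> split_ifs at hu hv <;> first | contradiction | omega
  · rintro ⟨i, hi, h⟩
    have hA : A i = if i = 0 then 0 else 3*i-2 := rfl
    rcases h with ⟨h1,h2⟩|⟨h1,h2⟩|⟨h1,h2⟩|⟨h1,h2⟩|⟨h1,h2⟩|⟨h1,h2⟩|⟨h1,h2⟩|⟨h1,h2⟩
    · exact adj_mk i 0 1 hi (by norm_num) (by norm_num) (by norm_num)
        (by simp [chainPos41]; omega) (by simp [chainPos41]; omega) (by split_ifs at hA <;> omega)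
    · exact adj_mk i 1 0 hi (by norm_num) (by norm_num) (by norm_num)
        (by simp [chainPos41]; omega) (by simp [chainPos41]; omega) (by split_ifs at hA <;> omega)
    · exact adj_mk i 1 2 hi (by norm_num) (by norm_num) (by norm_num)
        (by simp [chainPos41]; omega) (by simp [chainPos41]; omega) (by split_ifs at hA <;> omega)
    · exact adj_mk i 2 1 hi (by norm_num) (by norm_num) (by norm_num)
        (by simp [chainPos41]; omega) (by simp [chainPos41]; omega) (by split_ifs at hA <;> omega)
    · exact adj_mk i 2 3 hi (by norm_num) (by norm_num) (by norm_num)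
        (by simp [chainPos41]; omega) (by simp [chainPos41]; omega) (by split_ifs at hA <;> omega)
    · exact adj_mk i 3 2 hi (by norm_num) (by norm_num) (by norm_num)
        (by simp [chainPos41]; omega) (by simp [chainPos41]; omega) (by split_ifs at hA <;> omega)
    · exact adj_mk i 3 0 hi (by norm_num) (by norm_num) (by norm_num)
        (by simp [chainPos41]; omega) (by simp [chainPos41]; omega) (by split_ifs at hA <;> omega)
    · exact adj_mk i 0 3 hi (by norm_num) (by norm_num) (by norm_num)
        (by simp [chainPos41]; omega) (by simp [chainPos41]; omega) (by split_ifs at hA <;> omega)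

end OrthoAux

namespace OrthoAux

open SimpleGraph

variable {n : ℕ}

def va (n i : ℕ) : Fin (n*3+1) := vtx n (A i)
def vb (n i : ℕ) : Fin (n*3+1) := vtx n (3*i+1)
def vc (n i : ℕ) : Fin (n*3+1) := vtx n (3*i+2)
def vd (n i : ℕ) : Fin (n*3+1) := vtx n (3*i+3)

lemma A_le {i : ℕ} (h : i ≤ n) : A i ≤ n*3 := by simp only [A]; split_ifs <;> omega

lemma va_val {i : ℕ} (h : i ≤ n) : (va n i).val = A i := vtx_val (A_le h)
lemma vb_val {i : ℕ} (h : i < n) : (vb n i).val = 3*i+1 := vtx_val (by omega)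
lemma vc_val {i : ℕ} (h : i < n) : (vc n i).val = 3*i+2 := vtx_val (by omega)
lemma vd_val {i : ℕ} (h : i < n) : (vd n i).val = 3*i+3 := vtx_val (by omega)

lemma va_zero : va n 0 = vtx n 0 := rfl
lemma va_succ (i : ℕ) : va n (i+1) = vb n i := by
  show vtx n (A (i+1)) = vtx n (3*i+1); rw [A_succ]

lemma adj1 {i : ℕ} (hi : i < n) : (OG n).Adj (va n i) (vb n i) :=
  adj_iff.mpr ⟨i, hi, Or.inl ⟨va_val hi.le, vb_val hi⟩⟩
lemma adj2 {i : ℕ} (hi : i < n) : (OG n).Adj (vb n i) (vc n i) :=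
  adj_iff.mpr ⟨i, hi, Or.inr (Or.inr (Or.inl ⟨vb_val hi, vc_val hi⟩))⟩
lemma adj3 {i : ℕ} (hi : i < n) : (OG n).Adj (vc n i) (vd n i) :=
  adj_iff.mpr ⟨i, hi, Or.inr (Or.inr (Or.inr (Or.inr (Or.inl ⟨vc_val hi, vd_val hi⟩))))⟩
lemma adj4 {i : ℕ} (hi : i < n) : (OG n).Adj (vd n i) (va n i) :=
  adj_iff.mpr ⟨i, hi,
    Or.inr (Or.inr (Or.inr (Or.inr (Or.inr (Or.inr (Or.inl ⟨vd_val hi, va_val hi.le⟩))))))⟩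

lemma dd0A (b : ℕ) : dd 0 (A b) = b := by
  have h := ddAA 0 b; rw [A_zero] at h; rw [h]; omega
lemma ddA0 (b : ℕ) : dd (A b) 0 = b := by rw [dd_comm, dd0A]

lemma eq_vtx (u : Fin (n*3+1)) : u = vtx n u.val := Fin.ext (vtx_val (by omega)).symm

lemma reach_zero : ∀ m, m ≤ n*3 → (OG n).Reachable (vtx n m) (vtx n 0) := by
  intro m
  induction m using Nat.strong_induction_on with
  | _ m ih =>
    intro hm
    rcases canon m with rfl | ⟨t, rfl | rfl | rfl⟩
    · exact Reachable.refl _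
    · have ht : t < n := by omega
      have hA : A t ≤ 3*t := by simp only [A]; split_ifs <;> omega
      exact ((adj1 ht).symm.reachable).trans (ih (A t) (by omega) (by omega))
    · have ht : t < n := by omega
      exact ((adj2 ht).symm.reachable).trans (ih (3*t+1) (by omega) (by omega))
    · have ht : t < n := by omega
      exact ((adj3 ht).symm.reachable).trans (ih (3*t+2) (by omega) (by omega))

lemma reach (u v : Fin (n*3+1)) : (OG n).Reachable u v := by
  rw [eq_vtx u, eq_vtx v]
  exact (reach_zero u.val (by omega)).trans (reach_zero v.val (by omega)).symm

lemma conn : (OG n).Connected := ⟨reach⟩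

/-- dd changes by at most 1 along an edge -/
lemma adj_step {a b : ℕ} (h : ER n a b) (u : ℕ) : dd u b ≤ dd u a + 1 := by
  obtain ⟨i, hi, h⟩ := h
  rcases canon u with rfl | ⟨t, rfl | rfl | rfl⟩ <;>
  rcases h with ⟨rfl,rfl⟩|⟨rfl,rfl⟩|⟨rfl,rfl⟩|⟨rfl,rfl⟩|⟨rfl,rfl⟩|⟨rfl,rfl⟩|⟨rfl,rfl⟩|⟨rfl,rfl⟩ <;>
  simp only [dd0A, ddA0, dd0B, dd0C, dd0D, ddBA, ddBB, ddBC, ddBD, ddCA, ddCB, ddCC, ddCD,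
    ddDA, ddDB, ddDC, ddDD] <;>
  first | omega | (split_ifs <;> omega)

lemma dd_le_len {u a b : Fin (n*3+1)} (w : (OG n).Walk a b) :
    dd u.val b.val ≤ dd u.val a.val + w.length := by
  induction w with
  | nil => simp
  | @cons x y z hadj p ih =>
    have h := adj_step (adj_iff.mp hadj) u.val
    rw [SimpleGraph.Walk.length_cons]
    omega

lemma dd_le_dist (u v : Fin (n*3+1)) : dd u.val v.val ≤ (OG n).dist u v := by
  obtain ⟨w, hw⟩ := (reach u v).exists_walk_length_eq_dist
  have h := dd_le_len (u := u) w
  rw [dd_self] at h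
  omega


lemma dist_le_adj {u v : Fin (n*3+1)} (h : (OG n).Adj u v) : (OG n).dist u v ≤ 1 := by
  simpa using SimpleGraph.dist_le h.toWalk

lemma tri (u v w : Fin (n*3+1)) : (OG n).dist u w ≤ (OG n).dist u v + (OG n).dist v w :=
  conn.dist_triangle

/-- backbone bound -/
lemma Pback : ∀ (m s : ℕ), s + m ≤ n → (OG n).dist (va n s) (va n (s+m)) ≤ m := by
  intro m
  induction m with
  | zero => simp
  | succ m ih =>
    intro s h
    have h1 : s+m < n := by omega
    have e : va n (s+m+1) = vb n (s+m) := va_succ _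
    calc (OG n).dist (va n s) (va n (s+m+1))
        ≤ (OG n).dist (va n s) (va n (s+m)) + (OG n).dist (va n (s+m)) (va n (s+m+1)) :=
          tri _ _ _
      _ ≤ m + 1 := by
          have := ih s (by omega)
          have h2 : (OG n).dist (va n (s+m)) (va n (s+m+1)) ≤ 1 := by
            rw [e]; exact dist_le_adj (adj1 h1)
          omega

lemma Paa {a b : ℕ} (ha : a ≤ n) (hb : b ≤ n) :
    (OG n).dist (va n a) (va n b) ≤ max a b - min a b := by
  rcases le_total a b with h | h
  · have hp := Pback (n := n) (b-a) a (by omega)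
    have e : va n (a + (b-a)) = va n b := by congr 1; omega
    rw [e] at hp
    omega
  · have hp := Pback (n := n) (a-b) b (by omega)
    have e : va n (b + (a-b)) = va n a := by congr 1; omega
    rw [e] at hp
    rw [SimpleGraph.dist_comm]
    omega

lemma Pba {a b : ℕ} (ha : a < n) (hb : b ≤ n) :
    (OG n).dist (vb n a) (va n b) ≤ max (a+1) b - min (a+1) b := by
  rw [← va_succ]; exact Paa (by omega) hb

lemma Pab {a b : ℕ} (ha : a ≤ n) (hb : b < n) :
    (OG n).dist (va n a) (vb n b) ≤ max a (b+1) - min a (b+1) := by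
  rw [← va_succ]; exact Paa ha (by omega)

lemma Pbb {a b : ℕ} (ha : a < n) (hb : b < n) :
    (OG n).dist (vb n a) (vb n b) ≤ max a b - min a b := by
  rw [← va_succ, ← va_succ]
  have := Paa (n := n) (a := a+1) (b := b+1) (by omega) (by omega)
  omega

-- distance upper bounds matching the dd closed forms
lemma Lbc {a b : ℕ} (ha : a < n) (hb : b < n) :
    (OG n).dist (vb n a) (vc n b) ≤ (max a b - min a b) + 1 := by
  have h1 := Pbb ha hb
  have h2 : (OG n).dist (vb n b) (vc n b) ≤ 1 := dist_le_adj (adj2 hb)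
  have := tri (vb n a) (vb n b) (vc n b)
  omega

lemma Lbd {a b : ℕ} (ha : a < n) (hb : b < n) :
    (OG n).dist (vb n a) (vd n b) ≤ if a < b then b-a else if a = b then 2 else a-b+2 := by
  have h4 : (OG n).dist (va n b) (vd n b) ≤ 1 := by
    rw [SimpleGraph.dist_comm]; exact dist_le_adj (adj4 hb)
  split_ifs with h h'
  · have h1 := Pba ha (show b ≤ n by omega)
    have := tri (vb n a) (va n b) (vd n b)
    omega
  · subst h'
    have h1 := Pba ha (show a ≤ n by omega)
    have := tri (vb n a) (va n a) (vd n a)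
    omega
  · have h1 := Pbb ha hb
    have h2 : (OG n).dist (vb n b) (vc n b) ≤ 1 := dist_le_adj (adj2 hb)
    have h3 : (OG n).dist (vc n b) (vd n b) ≤ 1 := dist_le_adj (adj3 hb)
    have t1 := tri (vb n a) (vb n b) (vd n b)
    have t2 := tri (vb n b) (vc n b) (vd n b)
    omega

lemma Lcc {a b : ℕ} (ha : a < n) (hb : b < n) (hab : a ≠ b) :
    (OG n).dist (vc n a) (vc n b) ≤ (max a b - min a b) + 2 := by
  have h1 : (OG n).dist (vc n a) (vb n a) ≤ 1 := by
    rw [SimpleGraph.dist_comm]; exact dist_le_adj (adj2 ha)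
  have h2 := Pbb ha hb
  have h3 : (OG n).dist (vb n b) (vc n b) ≤ 1 := dist_le_adj (adj2 hb)
  have t1 := tri (vc n a) (vb n a) (vc n b)
  have t2 := tri (vb n a) (vb n b) (vc n b)
  omega

lemma Lcd {a b : ℕ} (ha : a < n) (hb : b < n) :
    (OG n).dist (vc n a) (vd n b) ≤ if a = b then 1 else if a < b then b-a+1 else a-b+3 := by
  have h1 : (OG n).dist (vc n a) (vb n a) ≤ 1 := by
    rw [SimpleGraph.dist_comm]; exact dist_le_adj (adj2 ha)
  have h4 : (OG n).dist (va n b) (vd n b) ≤ 1 := by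
    rw [SimpleGraph.dist_comm]; exact dist_le_adj (adj4 hb)
  split_ifs with h h'
  · subst h; exact dist_le_adj (adj3 ha)
  · have h2 := Pba ha (show b ≤ n by omega)
    have t1 := tri (vc n a) (vb n a) (vd n b)
    have t2 := tri (vb n a) (va n b) (vd n b)
    omega
  · have h2 := Pbb ha hb
    have h3 : (OG n).dist (vb n b) (vc n b) ≤ 1 := dist_le_adj (adj2 hb)
    have h5 : (OG n).dist (vc n b) (vd n b) ≤ 1 := dist_le_adj (adj3 hb)
    have t1 := tri (vc n a) (vb n a) (vd n b)
    have t2 := tri (vb n a) (vb n b) (vd n b)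
    have t3 := tri (vb n b) (vc n b) (vd n b)
    omega

lemma Ldd {a b : ℕ} (ha : a < n) (hb : b < n) (hab : a ≠ b) :
    (OG n).dist (vd n a) (vd n b) ≤ (max a b - min a b) + 2 := by
  have h1 : (OG n).dist (vd n a) (va n a) ≤ 1 := dist_le_adj (adj4 ha)
  have h2 := Paa (show a ≤ n by omega) (show b ≤ n by omega)
  have h4 : (OG n).dist (va n b) (vd n b) ≤ 1 := by
    rw [SimpleGraph.dist_comm]; exact dist_le_adj (adj4 hb)
  have t1 := tri (vd n a) (va n a) (vd n b)
  have t2 := tri (va n a) (va n b) (vd n b)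
  omega

lemma L0b {b : ℕ} (hb : b < n) : (OG n).dist (vtx n 0) (vb n b) ≤ b+1 := by
  rw [← va_zero]
  have := Pab (show 0 ≤ n by omega) hb
  omega

lemma L0c {b : ℕ} (hb : b < n) : (OG n).dist (vtx n 0) (vc n b) ≤ b+2 := by
  have h1 := L0b hb
  have h2 : (OG n).dist (vb n b) (vc n b) ≤ 1 := dist_le_adj (adj2 hb)
  have := tri (vtx n 0) (vb n b) (vc n b)
  omega

lemma L0d {b : ℕ} (hb : b < n) : (OG n).dist (vtx n 0) (vd n b) ≤ b+1 := by
  rw [← va_zero]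
  have h1 := Paa (show 0 ≤ n by omega) (show b ≤ n by omega)
  have h2 : (OG n).dist (va n b) (vd n b) ≤ 1 := by
    rw [SimpleGraph.dist_comm]; exact dist_le_adj (adj4 hb)
  have := tri (va n 0) (va n b) (vd n b)
  omega


theorem dist_le_dd (u v : Fin (n*3+1)) : (OG n).dist u v ≤ dd u.val v.val := by
  have hu4 := u.isLt
  have hv4 := v.isLt
  rcases canon u.val with h1 | ⟨s, h1 | h1 | h1⟩ <;> rcases canon v.val with h2 | ⟨t, h2 | h2 | h2⟩
  · have e : u = v := Fin.ext (by omega)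
    rw [e, h2, dd_self, SimpleGraph.dist_self]
  · have ht : t < n := by omega
    have eu : u = vtx n 0 := Fin.ext (by rw [vtx_val (by omega)]; exact h1)
    have ev : v = vb n t := Fin.ext (by rw [vb_val ht]; exact h2)
    rw [h1, h2, dd0B, eu, ev]; exact L0b ht
  · have ht : t < n := by omega
    have eu : u = vtx n 0 := Fin.ext (by rw [vtx_val (by omega)]; exact h1)
    have ev : v = vc n t := Fin.ext (by rw [vc_val ht]; exact h2)
    rw [h1, h2, dd0C, eu, ev]; exact L0c ht
  · have ht : t < n := by omega
    have eu : u = vtx n 0 := Fin.ext (by rw [vtx_val (by omega)]; exact h1)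
    have ev : v = vd n t := Fin.ext (by rw [vd_val ht]; exact h2)
    rw [h1, h2, dd0D, eu, ev]; exact L0d ht
  · have hs : s < n := by omega
    have eu : u = vb n s := Fin.ext (by rw [vb_val hs]; exact h1)
    have ev : v = vtx n 0 := Fin.ext (by rw [vtx_val (by omega)]; exact h2)
    rw [h1, h2, ddB0, eu, ev, SimpleGraph.dist_comm]; exact L0b hs
  · have hs : s < n := by omega
    have ht : t < n := by omega
    have eu : u = vb n s := Fin.ext (by rw [vb_val hs]; exact h1)
    have ev : v = vb n t := Fin.ext (by rw [vb_val ht]; exact h2)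
    rw [h1, h2, ddBB, eu, ev]; exact Pbb hs ht
  · have hs : s < n := by omega
    have ht : t < n := by omega
    have eu : u = vb n s := Fin.ext (by rw [vb_val hs]; exact h1)
    have ev : v = vc n t := Fin.ext (by rw [vc_val ht]; exact h2)
    rw [h1, h2, ddBC, eu, ev]; exact Lbc hs ht
  · have hs : s < n := by omega
    have ht : t < n := by omega
    have eu : u = vb n s := Fin.ext (by rw [vb_val hs]; exact h1)
    have ev : v = vd n t := Fin.ext (by rw [vd_val ht]; exact h2)
    rw [h1, h2, ddBD, eu, ev]; exact Lbd hs ht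
  · have hs : s < n := by omega
    have eu : u = vc n s := Fin.ext (by rw [vc_val hs]; exact h1)
    have ev : v = vtx n 0 := Fin.ext (by rw [vtx_val (by omega)]; exact h2)
    rw [h1, h2, ddC0, eu, ev, SimpleGraph.dist_comm]; exact L0c hs
  · have hs : s < n := by omega
    have ht : t < n := by omega
    have eu : u = vc n s := Fin.ext (by rw [vc_val hs]; exact h1)
    have ev : v = vb n t := Fin.ext (by rw [vb_val ht]; exact h2)
    rw [h1, h2, ddCB, eu, ev, SimpleGraph.dist_comm]
    have := Lbc ht hs
    omega
  · have hs : s < n := by omega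
    have ht : t < n := by omega
    have eu : u = vc n s := Fin.ext (by rw [vc_val hs]; exact h1)
    have ev : v = vc n t := Fin.ext (by rw [vc_val ht]; exact h2)
    rw [h1, h2, ddCC, eu, ev]
    split_ifs with h
    · subst h
      simp
    · exact Lcc hs ht h
  · have hs : s < n := by omega
    have ht : t < n := by omega
    have eu : u = vc n s := Fin.ext (by rw [vc_val hs]; exact h1)
    have ev : v = vd n t := Fin.ext (by rw [vd_val ht]; exact h2)
    rw [h1, h2, ddCD, eu, ev]; exact Lcd hs ht
  · have hs : s < n := by omega
    have eu : u = vd n s := Fin.ext (by rw [vd_val hs]; exact h1)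
    have ev : v = vtx n 0 := Fin.ext (by rw [vtx_val (by omega)]; exact h2)
    rw [h1, h2, ddD0, eu, ev, SimpleGraph.dist_comm]; exact L0d hs
  · have hs : s < n := by omega
    have ht : t < n := by omega
    have eu : u = vd n s := Fin.ext (by rw [vd_val hs]; exact h1)
    have ev : v = vb n t := Fin.ext (by rw [vb_val ht]; exact h2)
    rw [h1, h2, ddDB, eu, ev, SimpleGraph.dist_comm]
    have := Lbd ht hs
    split_ifs at this ⊢ <;> omega
  · have hs : s < n := by omega
    have ht : t < n := by omega
    have eu : u = vd n s := Fin.ext (by rw [vd_val hs]; exact h1)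
    have ev : v = vc n t := Fin.ext (by rw [vc_val ht]; exact h2)
    rw [h1, h2, ddDC, eu, ev, SimpleGraph.dist_comm]
    have := Lcd ht hs
    split_ifs at this ⊢ <;> omega
  · have hs : s < n := by omega
    have ht : t < n := by omega
    have eu : u = vd n s := Fin.ext (by rw [vd_val hs]; exact h1)
    have ev : v = vd n t := Fin.ext (by rw [vd_val ht]; exact h2)
    rw [h1, h2, ddDD, eu, ev]
    split_ifs with h
    · subst h
      simp
    · exact Ldd hs ht h

theorem dist_eq (u v : Fin (n*3+1)) : (OG n).dist u v = dd u.val v.val :=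
  le_antisymm (dist_le_dd u v) (dd_le_dist u v)

end OrthoAux

open Finset


namespace OrthoAux

variable {n : ℕ}

def ed1 (n i : ℕ) : Sym2 (Fin (n*3+1)) := s(va n i, vb n i)
def ed2 (n i : ℕ) : Sym2 (Fin (n*3+1)) := s(vb n i, vc n i)
def ed3 (n i : ℕ) : Sym2 (Fin (n*3+1)) := s(vc n i, vd n i)
def ed4 (n i : ℕ) : Sym2 (Fin (n*3+1)) := s(vd n i, va n i)

def sqEdges (n i : ℕ) : Finset (Sym2 (Fin (n*3+1))) := {ed1 n i, ed2 n i, ed3 n i, ed4 n i}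

def EF (n : ℕ) : Finset (Sym2 (Fin (n*3+1))) := (range n).biUnion (sqEdges n)

lemma mem_edgeSet_iff (e : Sym2 (Fin (n*3+1))) : e ∈ (OG n).edgeSet ↔ e ∈ EF n := by
  induction e using Sym2.ind with
  | _ u v =>
    rw [SimpleGraph.mem_edgeSet]
    constructor
    · intro h
      obtain ⟨i, hi, h⟩ := adj_iff.mp h
      refine mem_biUnion.mpr ⟨i, mem_range.mpr hi, ?_⟩
      simp only [sqEdges, mem_insert, mem_singleton, ed1, ed2, ed3, ed4]
      rcases h with ⟨h1,h2⟩|⟨h1,h2⟩|⟨h1,h2⟩|⟨h1,h2⟩|⟨h1,h2⟩|⟨h1,h2⟩|⟨h1,h2⟩|⟨h1,h2⟩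
      · exact Or.inl (by rw [show u = va n i from Fin.ext (by rw [va_val hi.le]; exact h1),
          show v = vb n i from Fin.ext (by rw [vb_val hi]; exact h2)])
      · exact Or.inl (by rw [show v = va n i from Fin.ext (by rw [va_val hi.le]; exact h1),
          show u = vb n i from Fin.ext (by rw [vb_val hi]; exact h2), Sym2.eq_swap])
      · exact Or.inr (Or.inl (by rw [show u = vb n i from Fin.ext (by rw [vb_val hi]; exact h1),
          show v = vc n i from Fin.ext (by rw [vc_val hi]; exact h2)]))
      · exact Or.inr (Or.inl (by rw [show v = vb n i from Fin.ext (by rw [vb_val hi]; exact h1),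
          show u = vc n i from Fin.ext (by rw [vc_val hi]; exact h2), Sym2.eq_swap]))
      · exact Or.inr (Or.inr (Or.inl (by rw [show u = vc n i from Fin.ext (by rw [vc_val hi]; exact h1),
          show v = vd n i from Fin.ext (by rw [vd_val hi]; exact h2)])))
      · exact Or.inr (Or.inr (Or.inl (by rw [show v = vc n i from Fin.ext (by rw [vc_val hi]; exact h1),
          show u = vd n i from Fin.ext (by rw [vd_val hi]; exact h2), Sym2.eq_swap])))
      · exact Or.inr (Or.inr (Or.inr (by rw [show u = vd n i from Fin.ext (by rw [vd_val hi]; exact h1),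
          show v = va n i from Fin.ext (by rw [va_val hi.le]; exact h2)])))
      · exact Or.inr (Or.inr (Or.inr (by rw [show v = vd n i from Fin.ext (by rw [vd_val hi]; exact h1),
          show u = va n i from Fin.ext (by rw [va_val hi.le]; exact h2), Sym2.eq_swap])))
    · intro h
      obtain ⟨i, hi, h⟩ := mem_biUnion.mp h
      rw [mem_range] at hi
      simp only [sqEdges, mem_insert, mem_singleton, ed1, ed2, ed3, ed4, Sym2.eq_iff] at h
      rcases h with (⟨rfl,rfl⟩|⟨rfl,rfl⟩)|(⟨rfl,rfl⟩|⟨rfl,rfl⟩)|(⟨rfl,rfl⟩|⟨rfl,rfl⟩)|(⟨rfl,rfl⟩|⟨rfl,rfl⟩)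
      · exact adj1 hi
      · exact (adj1 hi).symm
      · exact adj2 hi
      · exact (adj2 hi).symm
      · exact adj3 hi
      · exact (adj3 hi).symm
      · exact adj4 hi
      · exact (adj4 hi).symm


lemma A_eq (i : ℕ) : A i = 3*i - 2 := by simp only [A]; split_ifs <;> omega

lemma sym2_vtx {x y z w : Fin (n*3+1)} : s(x,y) = s(z,w) ↔
    (x.val = z.val ∧ y.val = w.val) ∨ (x.val = w.val ∧ y.val = z.val) := by
  rw [Sym2.eq_iff]
  simp [Fin.ext_iff]

lemma sqEdges_disj {i j : ℕ} (hi : i < n) (hj : j < n) (hij : i ≠ j) :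
    Disjoint (sqEdges n i) (sqEdges n j) := by
  rw [Finset.disjoint_left]
  intro e h1 h2
  simp only [sqEdges, mem_insert, mem_singleton] at h1 h2
  rcases h1 with rfl|rfl|rfl|rfl <;> rcases h2 with h2|h2|h2|h2 <;>
  simp only [ed1, ed2, ed3, ed4, sym2_vtx, va_val hi.le, vb_val hi, vc_val hi, vd_val hi,
    va_val hj.le, vb_val hj, vc_val hj, vd_val hj, A_eq] at h2 <;> omega

lemma ed_ne {i : ℕ} (hi : i < n) :
    (ed1 n i ≠ ed2 n i ∧ ed1 n i ≠ ed3 n i ∧ ed1 n i ≠ ed4 n i) ∧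
    (ed2 n i ≠ ed3 n i ∧ ed2 n i ≠ ed4 n i) ∧ ed3 n i ≠ ed4 n i := by
  refine ⟨⟨?_, ?_, ?_⟩, ⟨?_, ?_⟩, ?_⟩ <;>
  · intro h
    simp only [ed1, ed2, ed3, ed4, sym2_vtx, va_val hi.le, vb_val hi, vc_val hi, vd_val hi,
      A_eq] at h
    omega

def P (n : ℕ) (u v : Fin (n*3+1)) (e : Sym2 (Fin (n*3+1))) : Prop :=
  vertexEdgeDist (OG n) u e < vertexEdgeDist (OG n) v e

noncomputable instance (u v : Fin (n*3+1)) (e : Sym2 (Fin (n*3+1))) : Decidable (P n u v e) :=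
  Nat.decLt _ _

lemma P_iff (u v x y : Fin (n*3+1)) : P n u v s(x,y) ↔
    min (dd x.val u.val) (dd y.val u.val) < min (dd x.val v.val) (dd y.val v.val) := by
  simp only [P, vertexEdgeDist, Sym2.lift_mk, dist_eq]

lemma ecc_eq (u v : Fin (n*3+1)) :
    edgeCloserCount (OG n) u v
      = ∑ i ∈ range n, ((if P n u v (ed1 n i) then 1 else 0) + (if P n u v (ed2 n i) then 1 else 0)
        + (if P n u v (ed3 n i) then 1 else 0) + (if P n u v (ed4 n i) then 1 else 0)) := by
  classical
  have h1 : edgeCloserCount (OG n) u v = ((EF n).filter (P n u v)).card := by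
    rw [edgeCloserCount, Nat.card_eq_fintype_card, Fintype.card_subtype]
    congr 1
    ext e
    simp only [mem_filter, mem_univ, true_and, mem_edgeSet_iff]
    rfl
  rw [h1, EF, filter_biUnion, card_biUnion
    (fun i hi j hj hij => disjoint_filter_filter (sqEdges_disj (mem_range.mp hi) (mem_range.mp hj) hij))]
  refine sum_congr rfl fun i hi => ?_
  rw [mem_range] at hi
  obtain ⟨⟨n12, n13, n14⟩, ⟨n23, n24⟩, n34⟩ := ed_ne (n := n) hi
  rw [card_filter]
  rw [show sqEdges n i = insert (ed1 n i) (insert (ed2 n i) (insert (ed3 n i) {ed4 n i})) from rfl]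
  rw [sum_insert (by simp [n12, n13, n14]), sum_insert (by simp [n23, n24]),
    sum_insert (by simp [n34]), sum_singleton]
  omega

end OrthoAux

open Finset
namespace OrthoAux
variable {n : ℕ}

lemma sq1u {i j : ℕ} (hi : i < n) (hj : j < n) :
    ((if P n (va n i) (vb n i) (ed1 n j) then 1 else 0) + (if P n (va n i) (vb n i) (ed2 n j) then 1 else 0)
     + (if P n (va n i) (vb n i) (ed3 n j) then 1 else 0) + (if P n (va n i) (vb n i) (ed4 n j) then 1 else 0))
    = if j < i then 4 else if j = i then 1 else 0 := by
  simp only [ed1, ed2, ed3, ed4, P_iff, va_val hi.le, vb_val hi, vc_val hi, vd_val hi,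
    va_val hj.le, vb_val hj, vc_val hj, vd_val hj, ddAA, ddAB, ddAC, ddAD, ddBA, ddBB, ddBC,
    ddBD, ddCA, ddCB, ddCC, ddCD, ddDA, ddDB, ddDC, ddDD]
  split_ifs <;> omega

lemma sq1v {i j : ℕ} (hi : i < n) (hj : j < n) :
    ((if P n (vb n i) (va n i) (ed1 n j) then 1 else 0) + (if P n (vb n i) (va n i) (ed2 n j) then 1 else 0)
     + (if P n (vb n i) (va n i) (ed3 n j) then 1 else 0) + (if P n (vb n i) (va n i) (ed4 n j) then 1 else 0))
    = if i < j then 4 else if j = i then 1 else 0 := by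
  simp only [ed1, ed2, ed3, ed4, P_iff, va_val hi.le, vb_val hi, vc_val hi, vd_val hi,
    va_val hj.le, vb_val hj, vc_val hj, vd_val hj, ddAA, ddAB, ddAC, ddAD, ddBA, ddBB, ddBC,
    ddBD, ddCA, ddCB, ddCC, ddCD, ddDA, ddDB, ddDC, ddDD]
  split_ifs <;> omega

lemma sq2u {i j : ℕ} (hi : i < n) (hj : j < n) :
    ((if P n (vb n i) (vc n i) (ed1 n j) then 1 else 0) + (if P n (vb n i) (vc n i) (ed2 n j) then 1 else 0)
     + (if P n (vb n i) (vc n i) (ed3 n j) then 1 else 0) + (if P n (vb n i) (vc n i) (ed4 n j) then 1 else 0))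
    = if j = i then 1 else 4 := by
  simp only [ed1, ed2, ed3, ed4, P_iff, va_val hi.le, vb_val hi, vc_val hi, vd_val hi,
    va_val hj.le, vb_val hj, vc_val hj, vd_val hj, ddAA, ddAB, ddAC, ddAD, ddBA, ddBB, ddBC,
    ddBD, ddCA, ddCB, ddCC, ddCD, ddDA, ddDB, ddDC, ddDD]
  split_ifs <;> omega

lemma sq2v {i j : ℕ} (hi : i < n) (hj : j < n) :
    ((if P n (vc n i) (vb n i) (ed1 n j) then 1 else 0) + (if P n (vc n i) (vb n i) (ed2 n j) then 1 else 0)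
     + (if P n (vc n i) (vb n i) (ed3 n j) then 1 else 0) + (if P n (vc n i) (vb n i) (ed4 n j) then 1 else 0))
    = if j = i then 1 else 0 := by
  simp only [ed1, ed2, ed3, ed4, P_iff, va_val hi.le, vb_val hi, vc_val hi, vd_val hi,
    va_val hj.le, vb_val hj, vc_val hj, vd_val hj, ddAA, ddAB, ddAC, ddAD, ddBA, ddBB, ddBC,
    ddBD, ddCA, ddCB, ddCC, ddCD, ddDA, ddDB, ddDC, ddDD]
  split_ifs <;> omega

lemma sq3u {i j : ℕ} (hi : i < n) (hj : j < n) :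
    ((if P n (vc n i) (vd n i) (ed1 n j) then 1 else 0) + (if P n (vc n i) (vd n i) (ed2 n j) then 1 else 0)
     + (if P n (vc n i) (vd n i) (ed3 n j) then 1 else 0) + (if P n (vc n i) (vd n i) (ed4 n j) then 1 else 0))
    = if i < j then 4 else if j = i then 1 else 0 := by
  simp only [ed1, ed2, ed3, ed4, P_iff, va_val hi.le, vb_val hi, vc_val hi, vd_val hi,
    va_val hj.le, vb_val hj, vc_val hj, vd_val hj, ddAA, ddAB, ddAC, ddAD, ddBA, ddBB, ddBC,
    ddBD, ddCA, ddCB, ddCC, ddCD, ddDA, ddDB, ddDC, ddDD]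
  split_ifs <;> omega

lemma sq3v {i j : ℕ} (hi : i < n) (hj : j < n) :
    ((if P n (vd n i) (vc n i) (ed1 n j) then 1 else 0) + (if P n (vd n i) (vc n i) (ed2 n j) then 1 else 0)
     + (if P n (vd n i) (vc n i) (ed3 n j) then 1 else 0) + (if P n (vd n i) (vc n i) (ed4 n j) then 1 else 0))
    = if j < i then 4 else if j = i then 1 else 0 := by
  simp only [ed1, ed2, ed3, ed4, P_iff, va_val hi.le, vb_val hi, vc_val hi, vd_val hi,
    va_val hj.le, vb_val hj, vc_val hj, vd_val hj, ddAA, ddAB, ddAC, ddAD, ddBA, ddBB, ddBC,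
    ddBD, ddCA, ddCB, ddCC, ddCD, ddDA, ddDB, ddDC, ddDD]
  split_ifs <;> omega

lemma sq4u {i j : ℕ} (hi : i < n) (hj : j < n) :
    ((if P n (vd n i) (va n i) (ed1 n j) then 1 else 0) + (if P n (vd n i) (va n i) (ed2 n j) then 1 else 0)
     + (if P n (vd n i) (va n i) (ed3 n j) then 1 else 0) + (if P n (vd n i) (va n i) (ed4 n j) then 1 else 0))
    = if j = i then 1 else 0 := by
  simp only [ed1, ed2, ed3, ed4, P_iff, va_val hi.le, vb_val hi, vc_val hi, vd_val hi,
    va_val hj.le, vb_val hj, vc_val hj, vd_val hj, ddAA, ddAB, ddAC, ddAD, ddBA, ddBB, ddBC,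
    ddBD, ddCA, ddCB, ddCC, ddCD, ddDA, ddDB, ddDC, ddDD]
  split_ifs <;> omega

lemma sq4v {i j : ℕ} (hi : i < n) (hj : j < n) :
    ((if P n (va n i) (vd n i) (ed1 n j) then 1 else 0) + (if P n (va n i) (vd n i) (ed2 n j) then 1 else 0)
     + (if P n (va n i) (vd n i) (ed3 n j) then 1 else 0) + (if P n (va n i) (vd n i) (ed4 n j) then 1 else 0))
    = if j = i then 1 else 4 := by
  simp only [ed1, ed2, ed3, ed4, P_iff, va_val hi.le, vb_val hi, vc_val hi, vd_val hi,
    va_val hj.le, vb_val hj, vc_val hj, vd_val hj, ddAA, ddAB, ddAC, ddAD, ddBA, ddBB, ddBC,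
    ddBD, ddCA, ddCB, ddCC, ddCD, ddDA, ddDB, ddDC, ddDD]
  split_ifs <;> omega


lemma range_filter_lt {i : ℕ} (hi : i < n) : (range n).filter (· < i) = range i := by
  ext j; simp only [mem_filter, mem_range]; omega

lemma range_filter_gt {i : ℕ} (hi : i < n) : (range n).filter (fun j => i < j) = Ico (i+1) n := by
  ext j; simp only [mem_filter, mem_range, mem_Ico]; omega

lemma sumA {i : ℕ} (hi : i < n) :
    (∑ j ∈ range n, if j < i then 4 else if j = i then 1 else 0) = 4*i+1 := by
  have h : ∀ j ∈ range n, (if j < i then 4 else if j = i then 1 else 0)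
      = ((if j < i then 4 else 0) + (if j = i then 1 else 0)) := by
    intro j _; split_ifs <;> omega
  rw [sum_congr rfl h, sum_add_distrib, ← sum_filter, range_filter_lt hi, sum_const,
    card_range, Finset.sum_ite_eq' (range n) i (fun _ => 1), if_pos (mem_range.mpr hi)]
  simp [mul_comm]

lemma sumB {i : ℕ} (hi : i < n) :
    (∑ j ∈ range n, if i < j then 4 else if j = i then 1 else 0) = 4*(n-1-i)+1 := by
  have h : ∀ j ∈ range n, (if i < j then 4 else if j = i then 1 else 0)
      = ((if i < j then 4 else 0) + (if j = i then 1 else 0)) := by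
    intro j _; split_ifs <;> omega
  rw [sum_congr rfl h, sum_add_distrib, ← sum_filter, range_filter_gt hi, sum_const,
    Nat.card_Ico, Finset.sum_ite_eq' (range n) i (fun _ => 1), if_pos (mem_range.mpr hi)]
  simp only [smul_eq_mul]
  omega

lemma sumD {i : ℕ} (hi : i < n) :
    (∑ j ∈ range n, if j = i then 1 else 0) = 1 := by
  rw [Finset.sum_ite_eq' (range n) i (fun _ => 1), if_pos (mem_range.mpr hi)]

lemma sumC {i : ℕ} (hi : i < n) :
    (∑ j ∈ range n, if j = i then 1 else 4) = 4*(n-1)+1 := by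
  have hm : i ∈ range n := mem_range.mpr hi
  rw [← Finset.sum_erase_add (range n) _ hm]
  have h : ∀ j ∈ (range n).erase i, (if j = i then 1 else 4) = 4 := by
    intro j hj
    rw [if_neg (Finset.ne_of_mem_erase hj)]
  rw [sum_congr rfl h, sum_const, Finset.card_erase_of_mem hm, card_range, if_pos rfl]
  simp only [smul_eq_mul]
  omega

end OrthoAux

open Finset

namespace OrthoAux

variable {n : ℕ}

lemma ecc1u {i : ℕ} (hi : i < n) : edgeCloserCount (OG n) (va n i) (vb n i) = 4*i+1 := by
  rw [ecc_eq, sum_congr rfl (fun j hj => sq1u hi (mem_range.mp hj))]; exact sumA hi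

lemma ecc1v {i : ℕ} (hi : i < n) : edgeCloserCount (OG n) (vb n i) (va n i) = 4*(n-1-i)+1 := by
  rw [ecc_eq, sum_congr rfl (fun j hj => sq1v hi (mem_range.mp hj))]; exact sumB hi

lemma ecc2u {i : ℕ} (hi : i < n) : edgeCloserCount (OG n) (vb n i) (vc n i) = 4*(n-1)+1 := by
  rw [ecc_eq, sum_congr rfl (fun j hj => sq2u hi (mem_range.mp hj))]; exact sumC hi

lemma ecc2v {i : ℕ} (hi : i < n) : edgeCloserCount (OG n) (vc n i) (vb n i) = 1 := by
  rw [ecc_eq, sum_congr rfl (fun j hj => sq2v hi (mem_range.mp hj))]; exact sumD hi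

lemma ecc3u {i : ℕ} (hi : i < n) : edgeCloserCount (OG n) (vc n i) (vd n i) = 4*(n-1-i)+1 := by
  rw [ecc_eq, sum_congr rfl (fun j hj => sq3u hi (mem_range.mp hj))]; exact sumB hi

lemma ecc3v {i : ℕ} (hi : i < n) : edgeCloserCount (OG n) (vd n i) (vc n i) = 4*i+1 := by
  rw [ecc_eq, sum_congr rfl (fun j hj => sq3v hi (mem_range.mp hj))]; exact sumA hi

lemma ecc4u {i : ℕ} (hi : i < n) : edgeCloserCount (OG n) (vd n i) (va n i) = 1 := by
  rw [ecc_eq, sum_congr rfl (fun j hj => sq4u hi (mem_range.mp hj))]; exact sumD hi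

lemma ecc4v {i : ℕ} (hi : i < n) : edgeCloserCount (OG n) (va n i) (vd n i) = 4*(n-1)+1 := by
  rw [ecc_eq, sum_congr rfl (fun j hj => sq4v hi (mem_range.mp hj))]; exact sumC hi

lemma term1 {i : ℕ} (hi : i < n) :
    emostarTerm (OG n) (ed1 n i) = 4 * ((n:ℤ) - 1 - 2*(i:ℤ)).natAbs := by
  show emostarTerm (OG n) s(va n i, vb n i) = _
  rw [emostarTerm, Sym2.lift_mk]
  dsimp only
  rw [ecc1u hi, ecc1v hi]
  omega

lemma term2 {i : ℕ} (hi : i < n) : emostarTerm (OG n) (ed2 n i) = 4*(n-1) := by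
  show emostarTerm (OG n) s(vb n i, vc n i) = _
  rw [emostarTerm, Sym2.lift_mk]
  dsimp only
  rw [ecc2u hi, ecc2v hi]
  omega

lemma term3 {i : ℕ} (hi : i < n) :
    emostarTerm (OG n) (ed3 n i) = 4 * ((n:ℤ) - 1 - 2*(i:ℤ)).natAbs := by
  show emostarTerm (OG n) s(vc n i, vd n i) = _
  rw [emostarTerm, Sym2.lift_mk]
  dsimp only
  rw [ecc3u hi, ecc3v hi]
  omega

lemma term4 {i : ℕ} (hi : i < n) : emostarTerm (OG n) (ed4 n i) = 4*(n-1) := by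
  show emostarTerm (OG n) s(vd n i, va n i) = _
  rw [emostarTerm, Sym2.lift_mk]
  dsimp only
  rw [ecc4u hi, ecc4v hi]
  omega

lemma edgeFinset_eq {inst : Fintype (OG n).edgeSet} :
    @SimpleGraph.edgeFinset _ (OG n) inst = EF n := by
  ext e
  rw [SimpleGraph.mem_edgeFinset]
  exact mem_edgeSet_iff e

theorem emostar_OG (n : ℕ) :
    emostar (OG n) = ∑ i ∈ range n, (8 * ((n:ℤ) - 1 - 2*(i:ℤ)).natAbs + 8*(n-1)) := by
  classical
  unfold emostar
  rw [edgeFinset_eq]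
  rw [EF, sum_biUnion (fun i hi j hj hij =>
    sqEdges_disj (mem_range.mp hi) (mem_range.mp hj) hij)]
  refine sum_congr rfl fun i hi => ?_
  rw [mem_range] at hi
  obtain ⟨⟨n12, n13, n14⟩, ⟨n23, n24⟩, n34⟩ := ed_ne (n := n) hi
  rw [show sqEdges n i = insert (ed1 n i) (insert (ed2 n i) (insert (ed3 n i) {ed4 n i})) from rfl]
  rw [sum_insert (by simp [n12, n13, n14]), sum_insert (by simp [n23, n24]),
    sum_insert (by simp [n34]), sum_singleton]
  rw [term1 hi, term2 hi, term3 hi, term4 hi]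
  omega

lemma Sstep (m : ℕ) :
    (∑ i ∈ range (m+2), (((m:ℤ)+2) - 1 - 2*(i:ℤ)).natAbs)
      = (∑ i ∈ range m, ((m:ℤ) - 1 - 2*(i:ℤ)).natAbs) + (2*m+2) := by
  rw [show m+2 = (m+1)+1 from rfl, sum_range_succ', sum_range_succ]
  have h : ∀ i ∈ range m, (((m:ℤ)+2) - 1 - 2*((i+1:ℕ):ℤ)).natAbs
      = ((m:ℤ) - 1 - 2*(i:ℤ)).natAbs := by
    intro i _
    congr 1
    push_cast
    ring
  rw [sum_congr rfl h]
  have h1 : (((m:ℤ)+2) - 1 - 2*(((m+1:ℕ)):ℤ)).natAbs = m+1 := by push_cast; omega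
  have h2 : (((m:ℤ)+2) - 1 - 2*((0:ℕ):ℤ)).natAbs = m+1 := by push_cast; omega
  omega

lemma Sval (m : ℕ) : (∑ i ∈ range m, ((m:ℤ) - 1 - 2*(i:ℤ)).natAbs) = m*m/2 := by
  induction m using Nat.strong_induction_on with
  | _ m ih =>
    match m, ih with
    | 0, _ => simp
    | 1, _ => simp
    | (m+2), ih =>
      have h := ih m (by omega)
      have hs := Sstep m
      have hgoal : (∑ i ∈ range (m+2), (((m+2:ℕ):ℤ) - 1 - 2*(i:ℤ)).natAbs)
          = (∑ i ∈ range (m+2), (((m:ℤ)+2) - 1 - 2*(i:ℤ)).natAbs) := by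
        refine sum_congr rfl fun i _ => ?_
        have e2 : ((m+2:ℕ):ℤ) = (m:ℤ)+2 := by push_cast; ring
        rw [e2]
      rw [hgoal, hs, h]
      have e : (m+2)*(m+2) = m*m + (4*m+4) := by ring
      omega

end OrthoAux

open OrthoAux in
theorem emostar_orthoSquare (k : ℕ) (hk : 1 ≤ k) :
    emostar (cactusChain (2 * k) 4 1) = 48 * k ^ 2 - 16 * k ∧
    emostar (cactusChain (2 * k + 1) 4 1) = 48 * k ^ 2 + 32 * k := by
  obtain ⟨k', rfl⟩ : ∃ k', k = k'+1 := ⟨k-1, by omega⟩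
  constructor
  · have h := emostar_OG (2*(k'+1))
    rw [sum_add_distrib, ← Finset.mul_sum, Sval, sum_const, card_range, smul_eq_mul] at h
    refine h.trans ?_
    have q1 : (2*(k'+1))*(2*(k'+1)) = 4*(k'*k') + 8*k' + 4 := by ring
    have e1 : 2*(k'+1)-1 = 2*k'+1 := by omega
    rw [e1]
    have q2 : (2*(k'+1)) * (8*(2*k'+1)) = 32*(k'*k') + 48*k' + 16 := by ring
    have q3 : (k'+1)^2 = k'*k'+2*k'+1 := by ring
    omega
  · have h := emostar_OG (2*(k'+1)+1)
    rw [sum_add_distrib, ← Finset.mul_sum, Sval, sum_const, card_range, smul_eq_mul] at h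
    refine h.trans ?_
    have q1 : (2*(k'+1)+1)*(2*(k'+1)+1) = 4*(k'*k') + 12*k' + 9 := by ring
    have e1 : 2*(k'+1)+1-1 = 2*k'+2 := by omega
    rw [e1]
    have q2 : (2*(k'+1)+1) * (8*(2*k'+2)) = 32*(k'*k') + 80*k' + 48 := by ring
    have q3 : (k'+1)^2 = k'*k'+2*k'+1 := by ring
    omega
end

section
/- Let L_n be the para-chain hexagonal cactus of order n (n six-cycles in a chain, consecutive hexagons sharing one vertex, the cut vertices opposite in each internal hexagon). Then Mo_e(L_{2k}) = 72k² and Mo_e(L_{2k+1}) = 72k² + 72k for all k ≥ 1. -/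
open Finset

namespace Mo

def p6 (x : ℕ) : ℕ := if x = 0 then 0 else (x - 1) % 5 + 1
def c6 (x : ℕ) : ℕ := if x = 0 then 0 else (x - 1) / 5
def ad (p : ℕ) : ℕ := min p (6 - p)
def bd (p : ℕ) : ℕ := (p - 3) + (3 - p)
def cd (p q : ℕ) : ℕ := min ((p - q) + (q - p)) (6 - ((p - q) + (q - p)))

def Dc (c1 p1 c2 p2 : ℕ) : ℕ :=
  if c1 = c2 then cd p1 p2
  else if c1 < c2 then bd p1 + 3 * (c2 - c1 - 1) + ad p2
  else bd p2 + 3 * (c1 - c2 - 1) + ad p1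

def D (x y : ℕ) : ℕ := Dc (c6 x) (p6 x) (c6 y) (p6 y)

def ev (i p : ℕ) : ℕ := chainPos 6 3 i p

def Vc (c p : ℕ) : Prop := (p = 0 ∧ c = 0) ∨ (1 ≤ p ∧ p ≤ 5)

lemma coords_valid (x : ℕ) : Vc (c6 x) (p6 x) := by
  simp only [Vc, p6, c6]; split_ifs <;> omega

lemma coords_val (x : ℕ) : (x = 0 ∧ p6 x = 0 ∧ c6 x = 0) ∨ (x = 5 * c6 x + p6 x ∧ 1 ≤ p6 x ∧ p6 x ≤ 5) := by
  simp only [p6, c6]; split_ifs <;> omega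

lemma Dc_self (c p : ℕ) : Dc c p c p = 0 := by
  simp only [Dc, cd, ad, bd]; split_ifs <;> omega

lemma Dc_comm (c1 p1 c2 p2 : ℕ) : Dc c1 p1 c2 p2 = Dc c2 p2 c1 p1 := by
  simp only [Dc, cd, ad, bd]; split_ifs <;> omega

lemma Dc_eq_zero {c1 p1 c2 p2 : ℕ} (h1 : Vc c1 p1) (h2 : Vc c2 p2)
    (h : Dc c1 p1 c2 p2 = 0) : c1 = c2 ∧ p1 = p2 := by
  simp only [Dc, cd, ad, bd] at h; simp only [Vc] at h1 h2; split_ifs at h <;> omega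

lemma D_self (x : ℕ) : D x x = 0 := Dc_self _ _
lemma D_comm (x y : ℕ) : D x y = D y x := Dc_comm _ _ _ _

lemma D_eq_zero {x y : ℕ} (h : D x y = 0) : x = y := by
  have := Dc_eq_zero (coords_valid x) (coords_valid y) h
  rcases coords_val x with hx | hx <;> rcases coords_val y with hy | hy <;> omega

-- coordinates of ev
lemma evc {i p : ℕ} (h : (p = 0 ∧ i = 0) ∨ (1 ≤ p ∧ p ≤ 5)) :
    c6 (ev i p) = i ∧ p6 (ev i p) = p := by
  simp only [ev, chainPos, show (6:ℕ)-1=5 from rfl, c6, p6]; split_ifs <;> omega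

lemma cut_rw {i : ℕ} (hi : i ≠ 0) : ev i 0 = ev (i - 1) 3 := by
  simp only [ev, chainPos, show (6:ℕ)-1=5 from rfl, reduceIte]; split_ifs <;> first | exact (False.elim ‹False›) | omega

lemma Dc_cut_l {i q : ℕ} (j : ℕ) (hi : 1 ≤ i) (hq : q ≤ 5) :
    Dc (i - 1) 3 j q = Dc i 0 j q := by
  simp only [Dc, cd, ad, bd]; split_ifs <;> omega

lemma Dc_cut_r {j p : ℕ} (i : ℕ) (hj : 1 ≤ j) (hp : p ≤ 5) :
    Dc i p (j - 1) 3 = Dc i p j 0 := by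
  rw [Dc_comm, Dc_cut_l i hj hp, Dc_comm]

lemma D_ev_base {i p j q : ℕ} (h : (p = 0 ∧ i = 0) ∨ (1 ≤ p ∧ p ≤ 5))
    (h' : (q = 0 ∧ j = 0) ∨ (1 ≤ q ∧ q ≤ 5)) : D (ev i p) (ev j q) = Dc i p j q := by
  unfold D; rw [(evc h).1, (evc h).2, (evc h').1, (evc h').2]

lemma D_ev_l {i p j q : ℕ} (hp : p ≤ 5) (h' : (q = 0 ∧ j = 0) ∨ (1 ≤ q ∧ q ≤ 5)) :
    D (ev i p) (ev j q) = Dc i p j q := by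
  by_cases hp0 : p = 0
  · subst hp0
    by_cases hi0 : i = 0
    · subst hi0; exact D_ev_base (by omega) h'
    · rw [cut_rw hi0, D_ev_base (by omega) h', Dc_cut_l j (by omega) (by rcases h' with ⟨rfl,rfl⟩|h' <;> omega)]
  · exact D_ev_base (by omega) h'

lemma D_ev {i p j q : ℕ} (hp : p ≤ 5) (hq : q ≤ 5) :
    D (ev i p) (ev j q) = Dc i p j q := by
  by_cases hq0 : q = 0
  · subst hq0
    by_cases hj0 : j = 0
    · subst hj0; exact D_ev_l hp (by omega)
    · rw [cut_rw hj0, D_ev_l hp (by omega), Dc_cut_r i (by omega) hp]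
  · exact D_ev_l hp (by omega)

lemma ev_le {n i p : ℕ} (hi : i < n) (hp : p ≤ 5) : ev i p ≤ 5 * n := by
  simp only [ev, chainPos, show (6:ℕ)-1=5 from rfl, reduceIte]; split_ifs <;> omega

lemma coords_bound {n x : ℕ} (hx : x ≤ 5 * n) : p6 x = 0 ∨ c6 x < n := by
  have := coords_val x; omega

variable {n : ℕ}

lemma adj_iff (u v : Fin (n * (6 - 1) + 1)) :
    (cactusChain n 6 3).Adj u v ↔ D u.val v.val = 1 := by
  constructor
  · rintro ⟨hne, i, p, q, hi, hp, hq, hpq, hu, hv⟩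
    have : u.val = ev i p := hu
    have : v.val = ev i q := hv
    rw [‹u.val = ev i p›, ‹v.val = ev i q›, D_ev (by omega) (by omega)]
    simp only [Dc, cd, ad, bd]; split_ifs <;> omega
  · intro h
    have hx : u.val ≤ 5 * n := by have := u.isLt; omega
    have hy : v.val ≤ 5 * n := by have := v.isLt; omega
    have hcx := coords_val u.val
    have hcy := coords_val v.val
    have hne : u ≠ v := by
      intro he; rw [he, D_self] at h; omega
    refine ⟨hne, ?_⟩
    unfold D Dc cd ad bd at h
    split_ifs at h with h1 h2
    · exact ⟨c6 u.val, p6 u.val, p6 v.val, by omega, by omega, by omega, by omega,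
        by simp only [chainPos, show (6:ℕ)-1=5 from rfl, reduceIte]; split_ifs <;> omega,
        by simp only [chainPos, show (6:ℕ)-1=5 from rfl, reduceIte]; split_ifs <;> omega⟩
    · exact ⟨c6 v.val, 0, p6 v.val, by omega, by omega, by omega, by omega,
        by simp only [chainPos, show (6:ℕ)-1=5 from rfl, reduceIte]; split_ifs <;> omega,
        by simp only [chainPos, show (6:ℕ)-1=5 from rfl, reduceIte]; split_ifs <;> omega⟩
    · exact ⟨c6 u.val, p6 u.val, 0, by omega, by omega, by omega, by omega,
        by simp only [chainPos, show (6:ℕ)-1=5 from rfl, reduceIte]; split_ifs <;> omega,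
        by simp only [chainPos, show (6:ℕ)-1=5 from rfl, reduceIte]; split_ifs <;> omega⟩


set_option maxHeartbeats 2000000 in
lemma Dc_lipschitz {c1 p1 c2 p2 c3 p3 : ℕ} (h1 : Vc c1 p1) (h2 : Vc c2 p2) (h3 : Vc c3 p3)
    (h : Dc c2 p2 c3 p3 = 1) : Dc c1 p1 c2 p2 ≤ Dc c1 p1 c3 p3 + 1 := by
  simp only [Vc] at h1 h2 h3
  simp only [Dc, cd, ad, bd] at h ⊢
  split_ifs at h ⊢ <;> omega

lemma D_lip {u v y : ℕ} (h : D u v = 1) : D u y ≤ D v y + 1 := by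
  rw [D_comm u y, D_comm v y]
  exact Dc_lipschitz (coords_valid y) (coords_valid u) (coords_valid v) h

set_option maxHeartbeats 1000000 in
lemma step {n c1 p1 c2 p2 : ℕ} (h1 : Vc c1 p1) (h2 : Vc c2 p2)
    (hb1 : p1 = 0 ∨ c1 < n) (hb2 : p2 = 0 ∨ c2 < n) (hne : ¬(c1 = c2 ∧ p1 = p2)) :
    ∃ c p, Vc c p ∧ (p = 0 ∨ c < n) ∧ Dc c1 p1 c p = 1 ∧ Dc c p c2 p2 + 1 = Dc c1 p1 c2 p2 := by
  simp only [Vc] at *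
  rcases lt_trichotomy c1 c2 with hc | hc | hc
  · -- c1 < c2
    rcases Nat.lt_trichotomy p1 3 with hp | hp | hp
    · exact ⟨c1, p1 + 1, by omega, by omega, by simp only [Dc, cd, ad, bd]; split_ifs <;> omega,
        by simp only [Dc, cd, ad, bd]; split_ifs <;> omega⟩
    · by_cases hq : c2 = c1 + 1 ∧ 4 ≤ p2
      · exact ⟨c1 + 1, 5, by omega, by omega, by simp only [Dc, cd, ad, bd]; split_ifs <;> omega,
          by simp only [Dc, cd, ad, bd]; split_ifs <;> omega⟩
      · exact ⟨c1 + 1, 1, by omega, by omega, by simp only [Dc, cd, ad, bd]; split_ifs <;> omega,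
          by simp only [Dc, cd, ad, bd]; split_ifs <;> omega⟩
    · exact ⟨c1, p1 - 1, by omega, by omega, by simp only [Dc, cd, ad, bd]; split_ifs <;> omega,
        by simp only [Dc, cd, ad, bd]; split_ifs <;> omega⟩
  · -- same cycle
    by_cases hd : (p2 + 6 - p1) % 6 ≤ 3
    · by_cases h5 : p1 = 5
      · by_cases h0 : c1 = 0
        · exact ⟨0, 0, by omega, by omega, by simp only [Dc, cd, ad, bd]; split_ifs <;> omega,
            by simp only [Dc, cd, ad, bd]; split_ifs <;> omega⟩
        · exact ⟨c1 - 1, 3, by omega, by omega, by simp only [Dc, cd, ad, bd]; split_ifs <;> omega,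
            by simp only [Dc, cd, ad, bd]; split_ifs <;> omega⟩
      · exact ⟨c1, p1 + 1, by omega, by omega, by simp only [Dc, cd, ad, bd]; split_ifs <;> omega,
          by simp only [Dc, cd, ad, bd]; split_ifs <;> omega⟩
    · by_cases h1' : p1 = 1
      · by_cases h0 : c1 = 0
        · exact ⟨0, 0, by omega, by omega, by simp only [Dc, cd, ad, bd]; split_ifs <;> omega,
            by simp only [Dc, cd, ad, bd]; split_ifs <;> omega⟩
        · exact ⟨c1 - 1, 3, by omega, by omega, by simp only [Dc, cd, ad, bd]; split_ifs <;> omega,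
            by simp only [Dc, cd, ad, bd]; split_ifs <;> omega⟩
      · by_cases h0' : p1 = 0
        · exact ⟨0, 5, by omega, by omega, by simp only [Dc, cd, ad, bd]; split_ifs <;> omega,
            by simp only [Dc, cd, ad, bd]; split_ifs <;> omega⟩
        · exact ⟨c1, p1 - 1, by omega, by omega, by simp only [Dc, cd, ad, bd]; split_ifs <;> omega,
            by simp only [Dc, cd, ad, bd]; split_ifs <;> omega⟩
  · -- c1 > c2
    by_cases h15 : p1 = 1 ∨ p1 = 5
    · exact ⟨c1 - 1, 3, by omega, by omega, by simp only [Dc, cd, ad, bd]; split_ifs <;> omega,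
        by simp only [Dc, cd, ad, bd]; split_ifs <;> omega⟩
    · by_cases h3 : p1 ≤ 3
      · exact ⟨c1, p1 - 1, by omega, by omega, by simp only [Dc, cd, ad, bd]; split_ifs <;> omega,
          by simp only [Dc, cd, ad, bd]; split_ifs <;> omega⟩
      · exact ⟨c1, p1 + 1, by omega, by omega, by simp only [Dc, cd, ad, bd]; split_ifs <;> omega,
          by simp only [Dc, cd, ad, bd]; split_ifs <;> omega⟩


lemma val_coords {c p : ℕ} (h : Vc c p) :
    c6 (if p = 0 then 0 else 5 * c + p) = c ∧ p6 (if p = 0 then 0 else 5 * c + p) = p := by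
  simp only [Vc] at h; simp only [c6, p6]; split_ifs <;> omega

lemma exists_walk (m : ℕ) (u v : Fin (n * (6 - 1) + 1)) (h : D u.val v.val = m) :
    ∃ w : (cactusChain n 6 3).Walk u v, w.length = m := by
  induction m generalizing u v with
  | zero =>
    have : u = v := Fin.ext (D_eq_zero h)
    subst this; exact ⟨.nil, rfl⟩
  | succ m ih =>
    have hx : u.val ≤ 5 * n := by have := u.isLt; omega
    have hy : v.val ≤ 5 * n := by have := v.isLt; omega
    have hne : ¬(c6 u.val = c6 v.val ∧ p6 u.val = p6 v.val) := by
      rintro ⟨e1, e2⟩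
      unfold D at h; rw [e1, e2, Dc_self] at h; omega
    obtain ⟨c, p, hvc, hbnd, h1, h2⟩ := step (coords_valid u.val) (coords_valid v.val)
      (coords_bound hx) (coords_bound hy) hne
    have hzb : (if p = 0 then 0 else 5 * c + p) < n * (6 - 1) + 1 := by
      simp only [Vc] at hvc; split_ifs <;> omega
    have hcz := val_coords hvc
    have hadj : (cactusChain n 6 3).Adj u ⟨_, hzb⟩ := (adj_iff _ _).2 (by
      show D u.val (if p = 0 then 0 else 5 * c + p) = 1
      unfold D; rw [hcz.1, hcz.2]; exact h1)
    have hDz : D (if p = 0 then 0 else 5 * c + p) v.val = m := by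
      unfold D; rw [hcz.1, hcz.2]; unfold D at h; omega
    obtain ⟨w, hw⟩ := ih ⟨_, hzb⟩ v hDz
    exact ⟨.cons hadj w, by simp [hw]⟩

lemma D_le_length (u v : Fin (n * (6 - 1) + 1)) (w : (cactusChain n 6 3).Walk u v) :
    D u.val v.val ≤ w.length := by
  induction w with
  | nil => simp [D_self]
  | @cons a b c h w ih =>
    have h1 : D a.val b.val = 1 := (adj_iff _ _).1 h
    have := D_lip (y := c.val) h1
    simp only [SimpleGraph.Walk.length_cons]; omega

lemma dist_eq (u v : Fin (n * (6 - 1) + 1)) :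
    (cactusChain n 6 3).dist u v = D u.val v.val := by
  obtain ⟨w, hw⟩ := exists_walk (D u.val v.val) u v rfl
  refine le_antisymm (hw ▸ SimpleGraph.dist_le w) ?_
  obtain ⟨w', hw'⟩ := (SimpleGraph.Walk.reachable w).exists_walk_length_eq_dist
  rw [← hw']; exact D_le_length u v w'



-- ============ counting layer ============

lemma ev_lt {n i p : ℕ} (hi : i < n) (hp : p < 6) : ev i p < n * (6 - 1) + 1 := by
  have := ev_le (n := n) hi (by omega : p ≤ 5); omega

def eg (n : ℕ) (ip : Fin n × Fin 6) : Sym2 (Fin (n * (6 - 1) + 1)) :=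
  s(⟨ev ip.1 ip.2, ev_lt ip.1.isLt ip.2.isLt⟩,
    ⟨ev ip.1 ((ip.2 + 1) % 6), ev_lt ip.1.isLt (by omega)⟩)

lemma cd_succ {p : ℕ} (hp : p < 6) : cd p ((p + 1) % 6) = 1 := by
  simp only [cd]; omega

lemma eg_adj (ip : Fin n × Fin 6) :
    (cactusChain n 6 3).Adj ⟨ev ip.1 ip.2, ev_lt ip.1.isLt ip.2.isLt⟩
      ⟨ev ip.1 ((ip.2 + 1) % 6), ev_lt ip.1.isLt (by omega)⟩ := by
  rw [adj_iff]
  show D (ev ip.1 ip.2) (ev ip.1 ((ip.2 + 1) % 6)) = 1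
  rw [D_ev (by omega) (by omega)]
  simp only [Dc, if_pos rfl]
  exact cd_succ ip.2.isLt

lemma eg_mem (ip : Fin n × Fin 6) : eg n ip ∈ (cactusChain n 6 3).edgeSet := by
  unfold eg; rw [SimpleGraph.mem_edgeSet]; exact eg_adj ip

lemma ev_pair_inj {i p j r : ℕ} (hp : p < 6) (hr : r < 6)
    (h : (ev i p = ev j r ∧ ev i ((p + 1) % 6) = ev j ((r + 1) % 6)) ∨
      (ev i p = ev j ((r + 1) % 6) ∧ ev i ((p + 1) % 6) = ev j r)) : i = j ∧ p = r := by
  simp only [ev, chainPos, show (6:ℕ)-1=5 from rfl] at h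
  split_ifs at h <;> omega

lemma eg_inj (ip jr : Fin n × Fin 6) (h : eg n ip = eg n jr) : ip = jr := by
  obtain ⟨i, p⟩ := ip; obtain ⟨j, r⟩ := jr
  simp only [eg, Sym2.eq_iff] at h
  have h' : (ev (i:ℕ) (p:ℕ) = ev (j:ℕ) (r:ℕ) ∧ ev (i:ℕ) (((p:ℕ) + 1) % 6) = ev (j:ℕ) (((r:ℕ) + 1) % 6)) ∨
      (ev (i:ℕ) (p:ℕ) = ev (j:ℕ) (((r:ℕ) + 1) % 6) ∧ ev (i:ℕ) (((p:ℕ) + 1) % 6) = ev (j:ℕ) (r:ℕ)) := by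
    rcases h with ⟨h1, h2⟩ | ⟨h1, h2⟩
    · exact Or.inl ⟨congrArg Fin.val h1, congrArg Fin.val h2⟩
    · exact Or.inr ⟨congrArg Fin.val h1, congrArg Fin.val h2⟩
  have := ev_pair_inj p.isLt r.isLt h'
  ext
  · exact this.1
  · exact this.2

lemma eg_surj (e : Sym2 (Fin (n * (6 - 1) + 1))) (he : e ∈ (cactusChain n 6 3).edgeSet) :
    ∃ ip : Fin n × Fin 6, eg n ip = e := by
  induction e using Sym2.ind with
  | _ a b =>
    rw [SimpleGraph.mem_edgeSet] at he
    obtain ⟨hne, i, p, q, hi, hp, hq, hpq, ha, hb⟩ := he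
    rcases hpq with h1 | h1
    · refine ⟨(⟨i, hi⟩, ⟨p, hp⟩), ?_⟩
      have ea : (⟨ev i p, ev_lt hi hp⟩ : Fin (n * (6 - 1) + 1)) = a := (Fin.ext ha.symm : _)
      have eb : (⟨ev i ((p + 1) % 6), ev_lt hi (by omega)⟩ : Fin (n * (6 - 1) + 1)) = b := by
        apply Fin.ext; show ev i ((p + 1) % 6) = b.val; rw [hb, h1]; rfl
      show s(_, _) = s(a, b)
      rw [← ea, ← eb]
    · refine ⟨(⟨i, hi⟩, ⟨q, hq⟩), ?_⟩
      have ea : (⟨ev i q, ev_lt hi hq⟩ : Fin (n * (6 - 1) + 1)) = b := (Fin.ext hb.symm : _)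
      have eb : (⟨ev i ((q + 1) % 6), ev_lt hi (by omega)⟩ : Fin (n * (6 - 1) + 1)) = a := by
        apply Fin.ext; show ev i ((q + 1) % 6) = a.val; rw [ha, h1]; rfl
      show s(_, _) = s(a, b)
      rw [← ea, ← eb, Sym2.eq_swap]

lemma sum_split (A B : ℕ) : ∀ (m i : ℕ), i < m →
    ∑ j ∈ Finset.range m, (if j = i then 2 else if j < i then A else B)
      = i * A + 2 + (m - 1 - i) * B := by
  intro m
  induction m with
  | zero => omega
  | succ m ih =>
    intro i hi
    rw [Finset.sum_range_succ]
    by_cases hm : m = i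
    · subst hm
      rw [if_pos rfl]
      have : ∀ j ∈ Finset.range m, (if j = m then 2 else if j < m then A else B) = A := by
        intro j hj
        rw [Finset.mem_range] at hj
        rw [if_neg (by omega), if_pos hj]
      rw [Finset.sum_congr rfl this, Finset.sum_const, Finset.card_range, smul_eq_mul,
        mul_comm]
      have : m + 1 - 1 - m = 0 := by omega
      rw [this, Nat.zero_mul]
    · have him : i < m := by omega
      rw [ih i him, if_neg hm, if_neg (by omega)]
      have e1 : m + 1 - 1 - i = (m - 1 - i) + 1 := by omega
      rw [e1, Nat.add_mul, Nat.one_mul]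
      ring

lemma cd_inner {p q : ℕ} (hp : p < 6) (hq : q < 6)
    (hpq : (p + 1) % 6 = q ∨ (q + 1) % 6 = p) :
    (∑ r ∈ Finset.range 6,
      if min (cd r p) (cd ((r + 1) % 6) p) < min (cd r q) (cd ((r + 1) % 6) q)
      then (1:ℕ) else 0) = 2 := by
  rcases hpq with rfl | h
  · interval_cases p <;> decide
  · interval_cases q <;> subst h <;> decide

set_option maxHeartbeats 2000000 in
lemma inner_eval {i p q : ℕ} (hi : i < n) (hp : p < 6) (hq : q < 6)
    (hpq : (p + 1) % 6 = q ∨ (q + 1) % 6 = p) (j : Fin n) :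
    (∑ r ∈ Finset.range 6,
      if min (Dc j r i p) (Dc j ((r + 1) % 6) i p) < min (Dc j r i q) (Dc j ((r + 1) % 6) i q)
      then (1:ℕ) else 0)
    = (if (j:ℕ) = i then 2 else if (j:ℕ) < i then (if ad p < ad q then 6 else 0)
        else (if bd p < bd q then 6 else 0)) := by
  rcases lt_trichotomy ((j:ℕ)) i with hj | hj | hj
  · rw [if_neg (by omega), if_pos hj]
    have hDc : ∀ r p' : ℕ, Dc (j:ℕ) r i p' = bd r + 3 * (i - (j:ℕ) - 1) + ad p' := by
      intro r p'; simp only [Dc]; rw [if_neg (by omega), if_pos hj]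
    have hone : ∀ r ∈ Finset.range 6,
        (if min (Dc j r i p) (Dc j ((r + 1) % 6) i p) < min (Dc j r i q) (Dc j ((r + 1) % 6) i q)
          then (1:ℕ) else 0) = (if ad p < ad q then 1 else 0) := by
      intro r _
      rw [hDc, hDc, hDc, hDc]
      refine if_congr ?_ rfl rfl
      omega
    rw [Finset.sum_congr rfl hone, Finset.sum_const, Finset.card_range, smul_eq_mul]
    split_ifs <;> omega
  · rw [if_pos hj]
    have hDc : ∀ r p' : ℕ, Dc (j:ℕ) r i p' = cd r p' := by
      intro r p'; simp only [Dc]; rw [if_pos hj]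
    have hone : ∀ r ∈ Finset.range 6,
        (if min (Dc j r i p) (Dc j ((r + 1) % 6) i p) < min (Dc j r i q) (Dc j ((r + 1) % 6) i q)
          then (1:ℕ) else 0)
        = (if min (cd r p) (cd ((r + 1) % 6) p) < min (cd r q) (cd ((r + 1) % 6) q)
          then (1:ℕ) else 0) := by
      intro r _; rw [hDc, hDc, hDc, hDc]
    rw [Finset.sum_congr rfl hone]
    exact cd_inner hp hq hpq
  · rw [if_neg (by omega), if_neg (by omega)]
    have hDc : ∀ r p' : ℕ, Dc (j:ℕ) r i p' = bd p' + 3 * ((j:ℕ) - i - 1) + ad r := by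
      intro r p'; simp only [Dc]; rw [if_neg (by omega), if_neg (by omega)]
    have hone : ∀ r ∈ Finset.range 6,
        (if min (Dc j r i p) (Dc j ((r + 1) % 6) i p) < min (Dc j r i q) (Dc j ((r + 1) % 6) i q)
          then (1:ℕ) else 0) = (if bd p < bd q then 1 else 0) := by
      intro r _
      rw [hDc, hDc, hDc, hDc]
      refine if_congr ?_ rfl rfl
      omega
    rw [Finset.sum_congr rfl hone, Finset.sum_const, Finset.card_range, smul_eq_mul]
    split_ifs <;> omega

lemma ecc_eval {i p q : ℕ} (hi : i < n) (hp : p < 6) (hq : q < 6)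
    (hpq : (p + 1) % 6 = q ∨ (q + 1) % 6 = p)
    (u v : Fin (n * (6 - 1) + 1)) (hu : u.val = ev i p) (hv : v.val = ev i q) :
    edgeCloserCount (cactusChain n 6 3) u v
      = i * (if ad p < ad q then 6 else 0) + 2 + (n - 1 - i) * (if bd p < bd q then 6 else 0) := by
  classical
  unfold edgeCloserCount
  rw [Nat.card_eq_fintype_card, Fintype.card_subtype]
  have hbij : (Finset.univ.filter fun (ip : Fin n × Fin 6) =>
      vertexEdgeDist (cactusChain n 6 3) u (eg n ip) < vertexEdgeDist (cactusChain n 6 3) v (eg n ip)).card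
      = (Finset.univ.filter fun (e : Sym2 (Fin (n * (6 - 1) + 1))) =>
          e ∈ (cactusChain n 6 3).edgeSet ∧
          vertexEdgeDist (cactusChain n 6 3) u e < vertexEdgeDist (cactusChain n 6 3) v e).card := by
    refine Finset.card_bij (fun ip _ => eg n ip) ?_ ?_ ?_
    · intro ip hip
      rw [Finset.mem_filter] at hip ⊢
      exact ⟨Finset.mem_univ _, eg_mem ip, hip.2⟩
    · intro a _ b _ hab
      exact eg_inj a b hab
    · intro e hee
      rw [Finset.mem_filter] at hee
      obtain ⟨ip, rfl⟩ := eg_surj e hee.2.1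
      exact ⟨ip, Finset.mem_filter.2 ⟨Finset.mem_univ _, hee.2.2⟩, rfl⟩
  rw [← hbij, Finset.card_filter]
  have hP : ∀ (jr : Fin n × Fin 6),
      (vertexEdgeDist (cactusChain n 6 3) u (eg n jr) < vertexEdgeDist (cactusChain n 6 3) v (eg n jr))
      ↔ (min (Dc jr.1 jr.2 i p) (Dc jr.1 ((jr.2 + 1) % 6) i p)
          < min (Dc jr.1 jr.2 i q) (Dc jr.1 ((jr.2 + 1) % 6) i q)) := by
    intro jr
    unfold vertexEdgeDist eg
    rw [Sym2.lift_mk, Sym2.lift_mk]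
    simp only
    rw [dist_eq, dist_eq, dist_eq, dist_eq, hu, hv]
    show min (D (ev jr.1 jr.2) (ev i p)) (D (ev jr.1 ((jr.2+1)%6)) (ev i p))
        < min (D (ev jr.1 jr.2) (ev i q)) (D (ev jr.1 ((jr.2+1)%6)) (ev i q)) ↔ _
    rw [D_ev (by omega) (by omega), D_ev (by omega) (by omega),
      D_ev (by omega) (by omega), D_ev (by omega) (by omega)]
  have : ∀ jr : Fin n × Fin 6,
      (if vertexEdgeDist (cactusChain n 6 3) u (eg n jr) < vertexEdgeDist (cactusChain n 6 3) v (eg n jr) then (1:ℕ) else 0)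
      = (if min (Dc jr.1 jr.2 i p) (Dc jr.1 ((jr.2 + 1) % 6) i p)
          < min (Dc jr.1 jr.2 i q) (Dc jr.1 ((jr.2 + 1) % 6) i q) then (1:ℕ) else 0) := by
    intro jr; rw [if_congr (hP jr) rfl rfl]
  rw [Finset.sum_congr rfl (fun jr _ => this jr), Fintype.sum_prod_type]
  have hin : ∀ j : Fin n, (∑ r : Fin 6,
      if min (Dc j r i p) (Dc j ((r + 1) % 6) i p) < min (Dc j r i q) (Dc j ((r + 1) % 6) i q)
      then (1:ℕ) else 0)
      = (if (j:ℕ) = i then 2 else if (j:ℕ) < i then (if ad p < ad q then 6 else 0)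
          else (if bd p < bd q then 6 else 0)) := by
    intro j
    rw [Fin.sum_univ_eq_sum_range (fun r =>
      if min (Dc j r i p) (Dc j ((r + 1) % 6) i p) < min (Dc j r i q) (Dc j ((r + 1) % 6) i q)
      then (1:ℕ) else 0) 6]
    exact inner_eval hi hp hq hpq j
  rw [Finset.sum_congr rfl (fun j _ => hin j)]
  rw [Fin.sum_univ_eq_sum_range (fun j =>
    if j = i then 2 else if j < i then (if ad p < ad q then 6 else 0)
      else (if bd p < bd q then 6 else 0)) n]
  exact sum_split _ _ n i hi

def tm (n i : ℕ) : ℕ := (6 * i - 6 * (n - 1 - i)) + (6 * (n - 1 - i) - 6 * i)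

lemma natabs_eval {n i p : ℕ} (hi : i < n) (hp : p < 6) :
    ((((i * (if ad p < ad ((p+1)%6) then 6 else 0) + 2 + (n - 1 - i) * (if bd p < bd ((p+1)%6) then 6 else 0) : ℕ) : ℤ))
      - (((i * (if ad ((p+1)%6) < ad p then 6 else 0) + 2 + (n - 1 - i) * (if bd ((p+1)%6) < bd p then 6 else 0) : ℕ) : ℤ))).natAbs
    = tm n i := by
  interval_cases p <;> simp only [ad, bd, tm] <;> norm_num <;> omega

lemma term_eval (ip : Fin n × Fin 6) :
    emostarTerm (cactusChain n 6 3) (eg n ip) = tm n ip.1 := by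
  obtain ⟨i, p⟩ := ip
  unfold emostarTerm eg
  rw [Sym2.lift_mk]
  simp only
  rw [ecc_eval i.isLt p.isLt (by omega) (Or.inl rfl) _ _ rfl rfl,
    ecc_eval (i := (i:ℕ)) (p := ((p:ℕ)+1)%6) (q := (p:ℕ)) i.isLt (by omega) p.isLt (Or.inr rfl) _ _ rfl rfl]
  exact natabs_eval i.isLt p.isLt

lemma emostar_eval (n : ℕ) : emostar (cactusChain n 6 3) = ∑ i ∈ Finset.range n, 6 * tm n i := by
  letI := Fintype.ofFinite (Fin (n * (6 - 1) + 1))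
  letI := Classical.decEq (Fin (n * (6 - 1) + 1))
  letI := Classical.decRel (cactusChain n 6 3).Adj
  unfold emostar
  refine Eq.trans (Finset.sum_bij (s := (Finset.univ : Finset (Fin n × Fin 6)))
    (fun ip _ => eg n ip) ?_ ?_ ?_ (fun ip _ => rfl)).symm ?_
  · intro ip _
    exact SimpleGraph.mem_edgeFinset.2 (eg_mem ip)
  · intro a _ b _ h
    exact eg_inj a b h
  · intro e he
    obtain ⟨ip, hip⟩ := eg_surj e (SimpleGraph.mem_edgeFinset.1 he)
    exact ⟨ip, Finset.mem_univ _, hip⟩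
  rw [Finset.sum_congr rfl (fun ip _ => term_eval ip), Fintype.sum_prod_type]
  have : ∀ i : Fin n, (∑ _p : Fin 6, tm n i) = 6 * tm n (i:ℕ) := by
    intro i; rw [Finset.sum_const, Finset.card_univ, Fintype.card_fin, smul_eq_mul]
  rw [Finset.sum_congr rfl (fun i _ => this i)]
  exact Fin.sum_univ_eq_sum_range (fun i => 6 * tm n i) n

lemma msum_eval : ∀ k : ℕ,
    (∑ i ∈ Finset.range (2 * k), 6 * tm (2 * k) i = 72 * k ^ 2) ∧
    (∑ i ∈ Finset.range (2 * k + 1), 6 * tm (2 * k + 1) i = 72 * k ^ 2 + 72 * k) := by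
  intro k
  induction k with
  | zero => norm_num [tm]
  | succ k ih =>
    constructor
    · have e2 : 2 * (k + 1) = (2 * k + 1) + 1 := by ring
      rw [e2, Finset.sum_range_succ', Finset.sum_range_succ]
      have hc : ∀ i ∈ Finset.range (2 * k), 6 * tm ((2*k+1)+1) (i + 1) = 6 * tm (2 * k) i := by
        intro i hi; rw [Finset.mem_range] at hi; simp only [tm]; omega
      rw [Finset.sum_congr rfl hc, ih.1]
      have h1 : 6 * tm ((2*k+1)+1) (2*k+1) = 72 * k + 36 := by simp only [tm]; omega
      have h0 : 6 * tm ((2*k+1)+1) 0 = 72 * k + 36 := by simp only [tm]; omega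
      rw [h1, h0]; ring
    · have e2 : 2 * (k + 1) + 1 = (2 * k + 2) + 1 := by ring
      rw [e2, Finset.sum_range_succ', Finset.sum_range_succ]
      have hc : ∀ i ∈ Finset.range (2 * k + 1), 6 * tm ((2*k+2)+1) (i + 1) = 6 * tm (2 * k + 1) i := by
        intro i hi; rw [Finset.mem_range] at hi; simp only [tm]; omega
      rw [Finset.sum_congr rfl hc, ih.2]
      have h1 : 6 * tm ((2*k+2)+1) (2*k+2) = 72 * k + 72 := by simp only [tm]; omega
      have h0 : 6 * tm ((2*k+2)+1) 0 = 72 * k + 72 := by simp only [tm]; omega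
      rw [h1, h0]; ring


end Mo

theorem emostar_paraHex (k : ℕ) (hk : 1 ≤ k) :
    emostar (cactusChain (2 * k) 6 3) = 72 * k ^ 2 ∧
    emostar (cactusChain (2 * k + 1) 6 3) = 72 * k ^ 2 + 72 * k := by
  rw [Mo.emostar_eval, Mo.emostar_eval]
  exact Mo.msum_eval k
end

section
/- Let M_n be the meta-chain hexagonal cactus of order n: n hexagons (6-cycles) in a chain where consecutive hexagons share exactly one vertex, and the two shared vertices of each internal hexagon are at distance 2. Then Mo(M_{2k}) = 80k² − 20k and Mo(M_{2k+1}) = 80k² + 60k for all k ≥ 1. -/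
open Finset

/-!
Label the vertices of the chain by (hexagon, position). A greedy descent argument shows that
the graph distance is the explicit function `chainDist`: a geodesic from hexagon `i` to a
later hexagon `j` leaves `i` through its right cut vertex, crosses every hexagon in between
from cut vertex to cut vertex (two steps each) and enters `j` through its left cut vertex.

Hence every vertex outside hexagon `i` reaches it through one of its two cut vertices, and for
an edge `ab` of hexagon `i` the count `n_a` is a count in a weighted `C₆` whose positions `0`
and `2` carry the `5i` vertices to the left and the `5(n-1-i)` to the right. In `C₆` every
edge splits the six positions three against three, which gives the contribution
`20 |2i + 1 - n| + 10 (n - 1)` of hexagon `i`. Summing over `i` yields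
`Mo(M_n) = 20 ⌊n²/2⌋ + 10 n (n - 1)`.
-/

namespace SimpleGraph

variable {V : Type*} {G : SimpleGraph V}

theorem dist_eq_of_descent (f : V → V → ℕ) (hself : ∀ w, f w w = 0)
    (hlip : ∀ u v w, G.Adj u v → f u w ≤ f v w + 1)
    (hdesc : ∀ u w, u ≠ w → ∃ v, G.Adj u v ∧ f v w < f u w) (u w : V) :
    G.dist u w = f u w := by
  have upper : ∀ m u, f u w = m → ∃ p : G.Walk u w, p.length ≤ m := by
    intro m
    induction m using Nat.strong_induction_on with
    | _ m ih =>
      intro u hu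
      by_cases h : u = w
      · subst h
        exact ⟨.nil, by simp⟩
      obtain ⟨v, hadj, hlt⟩ := hdesc u w h
      obtain ⟨p, hp⟩ := ih _ (hu ▸ hlt) v rfl
      exact ⟨.cons hadj p, by simp only [Walk.length_cons]; omega⟩
  have lower : ∀ {a b} (p : G.Walk a b), f a b ≤ p.length := by
    intro a b p
    induction p with
    | nil => simp [hself]
    | @cons a c b hadj p ih =>
      have := hlip a c b hadj
      simp only [Walk.length_cons]
      omega
  obtain ⟨p, hp⟩ := upper _ u rfl
  obtain ⟨q, hq⟩ := Reachable.exists_walk_length_eq_dist ⟨p⟩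
  exact le_antisymm ((dist_le p).trans hp) (hq ▸ lower q)

end SimpleGraph

theorem closerCount_eq_card {V : Type*} [Fintype V] (G : SimpleGraph V) (u v : V) :
    closerCount G u v = #{w | G.dist w u < G.dist w v} := by
  classical
  rw [closerCount, Nat.card_eq_fintype_card, Fintype.card_subtype]

theorem mostar_eq_sum {V ι : Type*} [Finite V] (G : SimpleGraph V) (s : Finset ι)
    (e : ι → Sym2 V) (he : ∀ x ∈ s, e x ∈ G.edgeSet) (hinj : Set.InjOn e s)
    (hsurj : ∀ d ∈ G.edgeSet, ∃ x ∈ s, e x = d) :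
    mostar G = ∑ x ∈ s, mostarTerm G (e x) := by
  classical
  unfold mostar
  refine (Finset.sum_nbij e (fun x hx => ?_) hinj (fun d hd => ?_) fun _ _ => rfl).symm
  · simpa using he x hx
  · simpa using hsurj d (by simpa using hd)

namespace MetaHexChain

def c6Dist (p q : ℕ) : ℕ := min (Nat.dist p q) (6 - Nat.dist p q)

theorem exists_adj_c6Dist_lt : ∀ p < 6, ∀ q < 6, p ≠ q →
    ∃ r < 6, ((p + 1) % 6 = r ∨ (r + 1) % 6 = p) ∧ c6Dist r q < c6Dist p q := by
  decide

/-- Positions `0` and `2` of each hexagon are its left and right cut vertices. -/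
def chainDist (i p j q : ℕ) : ℕ :=
  if i = j then c6Dist p q
  else if i < j then c6Dist p 2 + 2 * (j - i - 1) + c6Dist 0 q
  else c6Dist p 0 + 2 * (i - j - 1) + c6Dist 2 q

theorem chainDist_le_of_adj {i j p r q : ℕ} (hp : p < 6) (hr : r < 6) (hq : q < 6)
    (hpr : (p + 1) % 6 = r ∨ (r + 1) % 6 = p) : chainDist i p j q ≤ chainDist i r j q + 1 := by
  simp only [chainDist, c6Dist, Nat.dist]
  split_ifs <;> omega

theorem chainDist_succ_zero_left (i j q : ℕ) : chainDist (i + 1) 0 j q = chainDist i 2 j q := by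
  simp only [chainDist, c6Dist, Nat.dist]
  split_ifs <;> omega

theorem chainDist_succ_zero_right (i p j : ℕ) : chainDist i p (j + 1) 0 = chainDist i p j 2 := by
  simp only [chainDist, c6Dist, Nat.dist]
  split_ifs <;> omega

theorem exists_adj_chainDist_lt {i j p q : ℕ} (hp : p < 6) (hq : q < 6)
    (hij : i < j → p ≠ 2) (hji : j < i → p ≠ 0) (hne : i = j → p ≠ q) :
    ∃ r < 6, ((p + 1) % 6 = r ∨ (r + 1) % 6 = p) ∧ chainDist i r j q < chainDist i p j q := by
  rcases lt_trichotomy i j with h | rfl | h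
  · obtain ⟨r, hr, hadj, hlt⟩ := exists_adj_c6Dist_lt p hp 2 (by norm_num) (hij h)
    exact ⟨r, hr, hadj, by simp only [chainDist, if_neg h.ne, if_pos h]; omega⟩
  · obtain ⟨r, hr, hadj, hlt⟩ := exists_adj_c6Dist_lt p hp q hq (hne rfl)
    exact ⟨r, hr, hadj, by simpa only [chainDist, if_pos rfl]⟩
  · obtain ⟨r, hr, hadj, hlt⟩ := exists_adj_c6Dist_lt p hp 0 (by norm_num) (hji h)
    exact ⟨r, hr, hadj, by simp only [chainDist, if_neg h.ne', if_neg h.not_gt]; omega⟩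

def hexEntry (i j q : ℕ) : ℕ := if j < i then 0 else if i < j then 2 else q

theorem chainDist_eq_add_c6Dist {i j q a : ℕ} (hq : q < 6) (ha : a < 6) :
    chainDist j q i a = chainDist j q i (hexEntry i j q) + c6Dist (hexEntry i j q) a := by
  simp only [chainDist, hexEntry, c6Dist, Nat.dist]
  split_ifs <;> omega

theorem chainPos_six_two (i p : ℕ) :
    chainPos 6 2 i p = if p = 0 then (if i = 0 then 0 else 5 * i - 3) else 5 * i + p := by
  simp only [chainPos]
  split_ifs <;> omega

theorem chainPos_of_pos {p : ℕ} (i : ℕ) (hp : 0 < p) : chainPos 6 2 i p = 5 * i + p := by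
  simp only [chainPos]
  split_ifs <;> omega

theorem chainPos_succ_zero (i : ℕ) : chainPos 6 2 (i + 1) 0 = chainPos 6 2 i 2 := by
  simp [chainPos]

theorem chainPos_lt {n i p : ℕ} (hi : i < n) (hp : p < 6) :
    chainPos 6 2 i p < n * (6 - 1) + 1 := by
  rw [chainPos_six_two]
  split_ifs <;> omega

theorem chainPos_eq_chainPos_iff {i j p q : ℕ} (hp : p < 6) (hq : q < 6) :
    chainPos 6 2 i p = chainPos 6 2 j q ↔
      (i = j ∧ p = q) ∨ (j = i + 1 ∧ p = 2 ∧ q = 0) ∨ (i = j + 1 ∧ p = 0 ∧ q = 2) := by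
  rw [chainPos_six_two, chainPos_six_two]
  split_ifs <;> omega

/-- Label `m ≥ 1` is position `(m - 1) % 5 + 1` of hexagon `(m - 1) / 5`; label `0` is
position `0` of hexagon `0`. -/
def hexIndex (m : ℕ) : ℕ := (m - 1) / 5

def hexPos (m : ℕ) : ℕ := if m = 0 then 0 else (m - 1) % 5 + 1

theorem hexPos_lt (m : ℕ) : hexPos m < 6 := by
  simp only [hexPos]
  split_ifs <;> omega

theorem hexIndex_add {i p : ℕ} (hp0 : 0 < p) (hp : p < 6) : hexIndex (5 * i + p) = i := by
  simp only [hexIndex]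
  omega

theorem hexPos_add {i p : ℕ} (hp0 : 0 < p) (hp : p < 6) : hexPos (5 * i + p) = p := by
  simp only [hexPos]
  split_ifs <;> omega

theorem chainPos_hexIndex_hexPos (m : ℕ) : chainPos 6 2 (hexIndex m) (hexPos m) = m := by
  rcases m with _ | m
  · rfl
  · rw [chainPos_of_pos _ (by simp [hexPos])]
    simp only [hexIndex, hexPos, if_neg m.succ_ne_zero]
    omega

theorem apply_hexIndex_hexPos {α : Type*} {F : ℕ → ℕ → α} (hF : ∀ i, F (i + 1) 0 = F i 2)
    {i p : ℕ} (hp : p < 6) :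
    F (hexIndex (chainPos 6 2 i p)) (hexPos (chainPos 6 2 i p)) = F i p := by
  rcases Nat.eq_zero_or_pos p with rfl | hp0
  · rcases i with _ | i
    · rfl
    · rw [chainPos_succ_zero, chainPos_of_pos i two_pos, hexIndex_add two_pos (by norm_num),
        hexPos_add two_pos (by norm_num), hF]
  · rw [chainPos_of_pos i hp0, hexIndex_add hp0 hp, hexPos_add hp0 hp]

/-- A cut vertex has coordinates in two hexagons; choosing the one nearer to hexagon `j`
lets the greedy step towards hexagon `j` stay inside a single hexagon. -/
theorem exists_chainPos_facing {n m j : ℕ} (hm : m < n * (6 - 1) + 1) (hj : j < n) :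
    ∃ i p, i < n ∧ p < 6 ∧ chainPos 6 2 i p = m ∧ (i < j → p ≠ 2) ∧ (j < i → p ≠ 0) := by
  by_cases h : hexIndex m < j ∧ hexPos m = 2
  · refine ⟨hexIndex m + 1, 0, by omega, by norm_num, ?_, fun _ => by norm_num, by omega⟩
    have hm := chainPos_hexIndex_hexPos m
    rw [h.2] at hm
    rw [chainPos_succ_zero, hm]
  · refine ⟨hexIndex m, hexPos m, ?_, hexPos_lt m, chainPos_hexIndex_hexPos m, ?_, ?_⟩
    · simp only [hexIndex]
      omega
    · exact fun hlt h2 => h ⟨hlt, h2⟩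
    · intro hlt h0
      simp only [hexIndex, hexPos] at hlt h0
      split_ifs at h0
      omega

def labelDist (m m' : ℕ) : ℕ := chainDist (hexIndex m) (hexPos m) (hexIndex m') (hexPos m')

theorem labelDist_self (m : ℕ) : labelDist m m = 0 := by
  simp [labelDist, chainDist, c6Dist]

theorem labelDist_chainPos_right {j q : ℕ} (hq : q < 6) (m : ℕ) :
    labelDist m (chainPos 6 2 j q) = chainDist (hexIndex m) (hexPos m) j q :=
  apply_hexIndex_hexPos (F := chainDist _ _) (chainDist_succ_zero_right _ _) hq

theorem labelDist_chainPos {i j p q : ℕ} (hp : p < 6) (hq : q < 6) :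
    labelDist (chainPos 6 2 i p) (chainPos 6 2 j q) = chainDist i p j q := by
  rw [labelDist_chainPos_right hq]
  exact apply_hexIndex_hexPos (F := fun i p => chainDist i p j q)
    (fun i => chainDist_succ_zero_left i j q) hp

theorem cactusChain_dist {n : ℕ} (hn : 0 < n) (u w : Fin (n * (6 - 1) + 1)) :
    (cactusChain n 6 2).dist u w = labelDist u w := by
  refine SimpleGraph.dist_eq_of_descent (fun u w : Fin _ => labelDist u w)
    (fun w => labelDist_self w) (fun u v w huv => ?_) (fun u w huw => ?_) u w
  · obtain ⟨-, i, p, q, -, hp, hq, hpq, hu, hv⟩ := huv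
    rw [hu, hv, ← chainPos_hexIndex_hexPos w, labelDist_chainPos hp (hexPos_lt _),
      labelDist_chainPos hq (hexPos_lt _)]
    exact chainDist_le_of_adj hp hq (hexPos_lt _) hpq
  · have hj : hexIndex w < n := by
      simp only [hexIndex]
      omega
    have hw := chainPos_hexIndex_hexPos w
    obtain ⟨i, p, hi, hp, hu, hij, hji⟩ := exists_chainPos_facing u.isLt hj
    obtain ⟨r, hr, hpr, hlt⟩ := exists_adj_chainDist_lt hp (hexPos_lt w) hij hji
      (fun hij hpq => huw (Fin.ext (by rw [← hu, ← hw, hij, hpq])))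
    have hvw : labelDist (chainPos 6 2 i r) w < labelDist u w := by
      rwa [← hu, ← hw, labelDist_chainPos hr (hexPos_lt w), labelDist_chainPos hp (hexPos_lt w)]
    refine ⟨⟨chainPos 6 2 i r, chainPos_lt hi hr⟩,
      ⟨fun h => ?_, i, p, r, hi, hp, hr, hpr, hu.symm, rfl⟩, hvw⟩
    rw [h] at hvw
    exact lt_irrefl _ hvw

def hexProj (i m : ℕ) : ℕ := hexEntry i (hexIndex m) (hexPos m)

theorem hexProj_of_le {i m : ℕ} (h : m ≤ 5 * i) : hexProj i m = 0 := by
  unfold hexProj hexEntry hexIndex hexPos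
  split_ifs <;> omega

theorem hexProj_add {i s : ℕ} (hs : s < 5) : hexProj i (5 * i + 1 + s) = s + 1 := by
  unfold hexProj hexEntry hexIndex hexPos
  split_ifs <;> omega

theorem hexProj_of_lt {i m : ℕ} (h : 5 * i + 5 < m) : hexProj i m = 2 := by
  unfold hexProj hexEntry hexIndex hexPos
  split_ifs <;> omega

theorem labelDist_chainPos_eq_add {i a : ℕ} (ha : a < 6) (m : ℕ) :
    labelDist m (chainPos 6 2 i a)
      = labelDist m (chainPos 6 2 i (hexProj i m)) + c6Dist (hexProj i m) a := by
  have hproj : hexProj i m < 6 := by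
    have := hexPos_lt m
    unfold hexProj hexEntry
    split_ifs <;> omega
  rw [labelDist_chainPos_right ha, labelDist_chainPos_right hproj]
  exact chainDist_eq_add_c6Dist (hexPos_lt m) ha

theorem sum_range_hexProj {M : Type*} [AddCommMonoid M] (f : ℕ → M) {n i : ℕ} (hi : i < n) :
    ∑ m ∈ range (n * (6 - 1) + 1), f (hexProj i m)
      = (5 * i + 1) • f 0 + ∑ s ∈ range 5, f (s + 1) + (5 * (n - 1 - i)) • f 2 := by
  rw [show n * (6 - 1) + 1 = 5 * i + 1 + 5 + 5 * (n - 1 - i) by omega, sum_range_add,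
    sum_range_add]
  congr 1
  congr 1
  · rw [sum_congr rfl fun m hm => by rw [hexProj_of_le (Nat.le_of_lt_succ (mem_range.mp hm))], sum_const,
      card_range]
  · exact sum_congr rfl fun s hs => by rw [hexProj_add (mem_range.mp hs)]
  · rw [sum_congr rfl fun m _ => by rw [hexProj_of_lt (by omega)], sum_const, card_range]

def c6Closer (a b s : ℕ) : ℕ := if c6Dist s a < c6Dist s b then 1 else 0

/-- `n_a` for an edge `ab` of a hexagon whose positions `0` and `2` carry `x` and `y` further
vertices. -/
def hexCloser (x y a b : ℕ) : ℕ :=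
  (x + 1) * c6Closer a b 0 + ∑ s ∈ range 5, c6Closer a b (s + 1) + y * c6Closer a b 2

theorem closerCount_cactusChain {n i a b : ℕ} (hi : i < n) (ha : a < 6) (hb : b < 6)
    (u v : Fin (n * (6 - 1) + 1)) (hu : u.val = chainPos 6 2 i a)
    (hv : v.val = chainPos 6 2 i b) :
    closerCount (cactusChain n 6 2) u v = hexCloser (5 * i) (5 * (n - 1 - i)) a b := by
  classical
  have hcloser : ∀ m, (if labelDist m u < labelDist m v then 1 else 0)
      = c6Closer a b (hexProj i m) := by
    intro m
    rw [hu, hv, labelDist_chainPos_eq_add ha, labelDist_chainPos_eq_add hb, c6Closer]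
    exact if_congr (by omega) rfl rfl
  rw [closerCount_eq_card, card_filter]
  simp_rw [cactusChain_dist (by omega : 0 < n)]
  rw [Fin.sum_univ_eq_sum_range (fun m => if labelDist m u < labelDist m v then 1 else 0),
    sum_congr rfl fun m _ => hcloser m, sum_range_hexProj _ hi, hexCloser, smul_eq_mul,
    smul_eq_mul]

theorem sum_hexCloser (x y : ℕ) :
    ∑ p ∈ range 6, ((hexCloser x y p ((p + 1) % 6) : ℤ) - hexCloser x y ((p + 1) % 6) p).natAbs
      = 4 * ((x : ℤ) - y).natAbs + 2 * (x + y) := by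
  simp only [sum_range_succ, sum_range_zero, hexCloser]
  norm_num [c6Closer, c6Dist, Nat.dist]
  omega

open Fin.NatCast in
def hexEdge (n : ℕ) (x : ℕ × ℕ) : Sym2 (Fin (n * (6 - 1) + 1)) :=
  s((chainPos 6 2 x.1 x.2 : Fin _), (chainPos 6 2 x.1 ((x.2 + 1) % 6) : Fin _))

open Fin.NatCast in
theorem val_chainPos {n i p : ℕ} (hi : i < n) (hp : p < 6) :
    ((chainPos 6 2 i p : Fin (n * (6 - 1) + 1)) : ℕ) = chainPos 6 2 i p :=
  Fin.val_cast_of_lt (chainPos_lt hi hp)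

theorem hexEdge_mem_edgeSet {n : ℕ} {x : ℕ × ℕ} (hx : x ∈ range n ×ˢ range 6) :
    hexEdge n x ∈ (cactusChain n 6 2).edgeSet := by
  obtain ⟨i, p⟩ := x
  simp only [mem_product, mem_range] at hx
  have hp' : (p + 1) % 6 < 6 := Nat.mod_lt _ (by norm_num)
  refine ⟨fun h => ?_, i, p, (p + 1) % 6, hx.1, hx.2, hp', Or.inl rfl, val_chainPos hx.1 hx.2,
    val_chainPos hx.1 hp'⟩
  have h := congrArg Fin.val h
  rw [val_chainPos hx.1 hx.2, val_chainPos hx.1 hp', chainPos_eq_chainPos_iff hx.2 hp'] at h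
  omega

theorem hexEdge_injOn (n : ℕ) : Set.InjOn (hexEdge n) (range n ×ˢ range 6 : Finset _) := by
  rintro ⟨i, p⟩ hx ⟨j, q⟩ hy hxy
  simp only [coe_product, coe_range, Set.mem_prod, Set.mem_Iio] at hx hy
  have hp' : (p + 1) % 6 < 6 := Nat.mod_lt _ (by norm_num)
  have hq' : (q + 1) % 6 < 6 := Nat.mod_lt _ (by norm_num)
  simp only [hexEdge, Sym2.eq_iff, Fin.ext_iff, val_chainPos hx.1 hx.2, val_chainPos hx.1 hp',
    val_chainPos hy.1 hy.2, val_chainPos hy.1 hq', chainPos_eq_chainPos_iff hx.2 hy.2,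
    chainPos_eq_chainPos_iff hp' hq', chainPos_eq_chainPos_iff hx.2 hq',
    chainPos_eq_chainPos_iff hp' hy.2] at hxy
  simp only [Prod.mk.injEq]
  omega

open Fin.NatCast in
theorem exists_hexEdge_eq {n : ℕ} {d : Sym2 (Fin (n * (6 - 1) + 1))}
    (hd : d ∈ (cactusChain n 6 2).edgeSet) : ∃ x ∈ range n ×ˢ range 6, hexEdge n x = d := by
  induction d with
  | _ u v =>
    obtain ⟨-, i, p, q, hi, hp, hq, hpq | hpq, hu, hv⟩ := hd
    · refine ⟨(i, p), mem_product.mpr ⟨mem_range.mpr hi, mem_range.mpr hp⟩, ?_⟩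
      rw [hexEdge, hpq, ← hu, ← hv, Fin.cast_val_eq_self, Fin.cast_val_eq_self]
    · refine ⟨(i, q), mem_product.mpr ⟨mem_range.mpr hi, mem_range.mpr hq⟩, ?_⟩
      rw [hexEdge, hpq, ← hu, ← hv, Fin.cast_val_eq_self, Fin.cast_val_eq_self, Sym2.eq_swap]

theorem sum_mostarTerm_hexEdge {n i : ℕ} (hi : i < n) :
    ∑ p ∈ range 6, mostarTerm (cactusChain n 6 2) (hexEdge n (i, p))
      = 20 * ((2 * i + 1 : ℤ) - n).natAbs + 10 * (n - 1) := by
  calc ∑ p ∈ range 6, mostarTerm (cactusChain n 6 2) (hexEdge n (i, p))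
      = ∑ p ∈ range 6, ((hexCloser (5 * i) (5 * (n - 1 - i)) p ((p + 1) % 6) : ℤ)
          - hexCloser (5 * i) (5 * (n - 1 - i)) ((p + 1) % 6) p).natAbs := by
        refine sum_congr rfl fun p hp => ?_
        have hp := mem_range.mp hp
        have hp' : (p + 1) % 6 < 6 := Nat.mod_lt _ (by norm_num)
        rw [hexEdge, mostarTerm, Sym2.lift_mk]
        dsimp only
        rw [closerCount_cactusChain hi hp hp' _ _ (val_chainPos hi hp) (val_chainPos hi hp'),
          closerCount_cactusChain hi hp' hp _ _ (val_chainPos hi hp') (val_chainPos hi hp)]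
    _ = 4 * ((5 * i : ℕ) - (5 * (n - 1 - i) : ℕ) : ℤ).natAbs + 2 * (5 * i + 5 * (n - 1 - i)) :=
        sum_hexCloser _ _
    _ = 20 * ((2 * i + 1 : ℤ) - n).natAbs + 10 * (n - 1) := by omega

theorem sum_range_natAbs_two_mul_add_one_sub (n : ℕ) :
    ∑ i ∈ range n, ((2 * i + 1 : ℤ) - n).natAbs = n ^ 2 / 2 := by
  induction n using Nat.twoStepInduction with
  | zero => rfl
  | one => rfl
  | more n ih _ =>
    have hshift : ∀ i ∈ range n, ((2 * ↑(i + 1) + 1 : ℤ) - ↑(n + 2)).natAbs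
        = ((2 * i + 1 : ℤ) - n).natAbs := fun i _ => by push_cast; ring_nf
    rw [sum_range_succ, sum_range_succ', sum_congr rfl hshift, ih]
    ring_nf
    omega

theorem mostar_cactusChain_six_two (n : ℕ) :
    mostar (cactusChain n 6 2) = 20 * (n ^ 2 / 2) + 10 * n * (n - 1) := by
  rw [mostar_eq_sum _ _ (hexEdge n) (fun x hx => hexEdge_mem_edgeSet hx) (hexEdge_injOn n)
    (fun d hd => exists_hexEdge_eq hd), sum_product,
    sum_congr rfl fun i hi => sum_mostarTerm_hexEdge (mem_range.mp hi), sum_add_distrib,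
    ← mul_sum, sum_range_natAbs_two_mul_add_one_sub, sum_const, card_range, smul_eq_mul]
  ring

end MetaHexChain

theorem mostar_metaHex_general (k : ℕ) :
    mostar (cactusChain (2 * k) 6 2) = 80 * k ^ 2 - 20 * k ∧
    mostar (cactusChain (2 * k + 1) 6 2) = 80 * k ^ 2 + 60 * k := by
  rw [MetaHexChain.mostar_cactusChain_six_two, MetaHexChain.mostar_cactusChain_six_two]
  constructor
  · rcases k with _ | k
    · rfl
    · rw [show 2 * (k + 1) - 1 = 2 * k + 1 by omega]
      ring_nf
      omega
  · rw [Nat.add_sub_cancel]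
    ring_nf
    omega

theorem mostar_metaHex (k : ℕ) (hk : 1 ≤ k) :
    mostar (cactusChain (2 * k) 6 2) = 80 * k ^ 2 - 20 * k ∧
    mostar (cactusChain (2 * k + 1) 6 2) = 80 * k ^ 2 + 60 * k :=
  mostar_metaHex_general k
end
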